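/- arXiv:1003.0412 — 8 statements merged into one kernel-verified Lean document; each statement's English description precedes it below -/
import Mathlib

section
/- Let k be a field, V a finite-dimensional k-vector space, and g ∈ GL(V) a unipotent element with N := g − 1, whose Jordan blocks have sizes n_1 ≥ n_2 ≥ … ≥ n_u ≥ 1. Let m_1 ≥ m_2 ≥ … ≥ m_f ≥ 1 be integers with m_1 + … + m_f = dim V, and suppose there exist vectors x_1, …, x_f in V such that the vectors g^i x_r (r ∈ [1,f], i ∈ [0, m_r − 1]) form a basis of V. Setting n_i = 0 for i > u and m_i = 0 for i > f, one has m_1 + m_2 + … + m_c ≤ n_1 + n_2 + … + n_c for every c ≥ 1; in particular u ≤ f. -/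
/-!
Put `N = g - 1`. Expanding `g ^ i = (N + 1) ^ i` and `N ^ s = (g - 1) ^ s` shows that each
`g ^ i x` lies in `range (N ^ j) + span {g ^ t x | t ≤ i, t < j}`, so the cyclic basis gives
`dim V ≤ rank N ^ j + ∑ r, min (m r) j`, i.e. `∑ r, (m r - j) ≤ rank N ^ j`. On the other hand
`N ^ j` shifts every Jordan chain by `j`, so `rank N ^ j ≤ ∑ r, (n r - j)`. Comparing the two
truncated sums at `j = n (c + 1)` gives the inequality of partial sums. For `u ≤ f`, the last
vectors of the `u` Jordan chains are independent vectors of `ker N`, while the cyclic bound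
at `j = 1` gives `dim ker N ≤ f`.
-/

open Polynomial Submodule

namespace Module.End

variable {R M : Type*}

theorem aeval_apply_mem_span_pow_apply [CommSemiring R] [AddCommMonoid M] [Module R M]
    (A : Module.End R M) (y : M) {p : R[X]} {d : ℕ} (hp : p.natDegree ≤ d) :
    aeval A p y ∈ span R ((fun s => (A ^ s) y) '' Set.Iic d) := by
  rw [aeval_eq_sum_range' (Nat.lt_succ_of_le hp), LinearMap.sum_apply]
  exact sum_mem fun s hs => smul_mem _ _ <|
    subset_span ⟨s, Nat.lt_succ_iff.mp (Finset.mem_range.mp hs), rfl⟩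

variable [CommRing R] [AddCommGroup M] [Module R M] (a : Module.End R M) (y : M)

theorem pow_apply_mem_span_sub_one_pow_apply (i : ℕ) :
    (a ^ i) y ∈ span R ((fun s => ((a - 1) ^ s) y) '' Set.Iic i) := by
  have hdeg : ((X + 1 : R[X]) ^ i).natDegree ≤ i := by
    rw [← C_1]
    exact natDegree_pow_le_of_le i (natDegree_add_C.trans_le (natDegree_X_le (R := R)))
      |>.trans_eq (mul_one i)
  simpa using (a - 1).aeval_apply_mem_span_pow_apply y hdeg

theorem sub_one_pow_apply_mem_span_pow_apply (i : ℕ) :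
    ((a - 1) ^ i) y ∈ span R ((fun s => (a ^ s) y) '' Set.Iic i) := by
  have hdeg : ((X - 1 : R[X]) ^ i).natDegree ≤ i := by
    rw [← C_1]
    exact natDegree_pow_le_of_le i (natDegree_X_sub_C_le (1 : R)) |>.trans_eq (mul_one i)
  simpa using a.aeval_apply_mem_span_pow_apply y hdeg

theorem pow_apply_mem_range_sup_span (i j : ℕ) :
    (a ^ i) y ∈ LinearMap.range ((a - 1) ^ j) ⊔
      span R ((fun t => (a ^ t) y) '' (Set.Iic i ∩ Set.Iio j)) := by
  refine span_le.mpr ?_ (a.pow_apply_mem_span_sub_one_pow_apply y i)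
  rintro _ ⟨s, hsi, rfl⟩
  rcases le_or_gt j s with hjs | hsj
  · refine mem_sup_left ⟨((a - 1) ^ (s - j)) y, ?_⟩
    rw [← Module.End.mul_apply, ← pow_add, Nat.add_sub_cancel' hjs]
  · refine mem_sup_right (span_mono (Set.image_mono fun t ht => ?_)
      (a.sub_one_pow_apply_mem_span_pow_apply y s))
    exact ⟨Set.mem_Iic.mpr (le_trans ht hsi), lt_of_le_of_lt ht hsj⟩

theorem pow_apply_of_chain {N : Module.End R M} {v : ℕ → M} {len : ℕ}
    (hstep : ∀ i, i + 1 < len → N (v i) = v (i + 1)) (hend : N (v (len - 1)) = 0)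
    {i : ℕ} (hi : i < len) (t : ℕ) :
    (N ^ t) (v i) = if i + t < len then v (i + t) else 0 := by
  induction t with
  | zero => simp [hi]
  | succ t ih =>
    rw [pow_succ', Module.End.mul_apply, ih]
    by_cases hlt : i + (t + 1) < len
    · rw [if_pos (by omega), if_pos hlt, hstep _ (by omega), add_assoc]
    · by_cases hlast : i + t < len
      · rw [if_pos hlast, if_neg hlt, show i + t = len - 1 by omega, hend]
      · rw [if_neg hlast, if_neg hlt, map_zero]

end Module.End

section Rank

open Module LinearMap

variable {k V ι : Type*} [Field k] [AddCommGroup V] [Module k V]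

theorem LinearIndependent.card_le_finrank_of_forall_mem {W : Submodule k V}
    [FiniteDimensional k W] [Fintype ι] {w : ι → V} (hli : LinearIndependent k w)
    (hw : ∀ i, w i ∈ W) : Fintype.card ι ≤ finrank k W := by
  rw [← finrank_span_eq_card hli]
  exact Submodule.finrank_mono (span_le.mpr (Set.range_subset_iff.mpr hw))

theorem finrank_range_pow_le_sum_tsub (N : Module.End k V) (S : Finset ι) (n : ι → ℕ)
    (v : ι → ℕ → V) (hstep : ∀ r ∈ S, ∀ i, i + 1 < n r → N (v r i) = v r (i + 1))
    (hend : ∀ r ∈ S, N (v r (n r - 1)) = 0)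
    (hsp : ⊤ ≤ span k {w | ∃ r ∈ S, ∃ i < n r, v r i = w}) (j : ℕ) :
    finrank k (range (N ^ j)) ≤ ∑ r ∈ S, (n r - j) := by
  classical
  set T : Finset V := (S.sigma fun r => Finset.Ico j (n r)).image fun q => v q.1 q.2
  have hle : range (N ^ j) ≤ span k (T : Set V) := by
    rw [range_eq_map, ← top_le_iff.mp hsp, Submodule.map_span, span_le]
    rintro _ ⟨_, ⟨r, hr, i, hi, rfl⟩, rfl⟩
    rw [Module.End.pow_apply_of_chain (hstep r hr) (hend r hr) hi]
    split_ifs with hij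
    · refine subset_span (Finset.mem_image.mpr ⟨⟨r, i + j⟩, ?_, rfl⟩)
      exact Finset.mem_sigma.mpr ⟨hr, Finset.mem_Ico.mpr ⟨Nat.le_add_left j i, hij⟩⟩
    · exact zero_mem _
  calc finrank k (range (N ^ j)) ≤ finrank k (span k (T : Set V)) := Submodule.finrank_mono hle
    _ ≤ T.card := finrank_span_finset_le_card T
    _ ≤ ∑ r ∈ S, (n r - j) := Finset.card_image_le.trans (by simp)

variable [FiniteDimensional k V] (a : Module.End k V) (S : Finset ι) (x : ι → V) (m : ι → ℕ)

theorem finrank_le_finrank_range_sub_one_pow_add_sum_min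
    (hsp : ⊤ ≤ span k {w | ∃ r ∈ S, ∃ i < m r, (a ^ i) (x r) = w}) (j : ℕ) :
    finrank k V ≤ finrank k (range ((a - 1) ^ j)) + ∑ r ∈ S, min (m r) j := by
  classical
  set U : Finset V :=
    (S.sigma fun r => Finset.range (min (m r) j)).image fun q => (a ^ q.2) (x q.1)
  have htop : ⊤ ≤ range ((a - 1) ^ j) ⊔ span k (U : Set V) := by
    refine hsp.trans (span_le.mpr ?_)
    rintro _ ⟨r, hr, i, hi, rfl⟩
    have hsub : (fun t => (a ^ t) (x r)) '' (Set.Iic i ∩ Set.Iio j) ⊆ U := by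
      rintro _ ⟨t, ⟨hti, htj⟩, rfl⟩
      refine Finset.mem_image.mpr ⟨⟨r, t⟩, Finset.mem_sigma.mpr ⟨hr, ?_⟩, rfl⟩
      exact Finset.mem_range.mpr (lt_min (lt_of_le_of_lt hti hi) htj)
    exact sup_le_sup_left (span_mono (R := k) hsub) _ (a.pow_apply_mem_range_sup_span (x r) i j)
  have hU : finrank k (span k (U : Set V)) ≤ ∑ r ∈ S, min (m r) j :=
    (finrank_span_finset_le_card U).trans (Finset.card_image_le.trans (by simp))
  calc finrank k V = finrank k (⊤ : Submodule k V) := (finrank_top k V).symm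
    _ ≤ finrank k ↥(range ((a - 1) ^ j) ⊔ span k (U : Set V)) := Submodule.finrank_mono htop
    _ ≤ _ := (Submodule.finrank_add_le_finrank_add_finrank _ _).trans (Nat.add_le_add_left hU _)

theorem sum_tsub_le_finrank_range_sub_one_pow
    (hsp : ⊤ ≤ span k {w | ∃ r ∈ S, ∃ i < m r, (a ^ i) (x r) = w})
    (hsum : ∑ r ∈ S, m r = finrank k V) (j : ℕ) :
    ∑ r ∈ S, (m r - j) ≤ finrank k (range ((a - 1) ^ j)) := by
  have h := finrank_le_finrank_range_sub_one_pow_add_sum_min a S x m hsp j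
  have hsplit : ∑ r ∈ S, (m r - j) + ∑ r ∈ S, min (m r) j = ∑ r ∈ S, m r := by
    rw [← Finset.sum_add_distrib]
    exact Finset.sum_congr rfl fun r _ => tsub_add_min
  omega

theorem finrank_ker_sub_one_le_card
    (hsp : ⊤ ≤ span k {w | ∃ r ∈ S, ∃ i < m r, (a ^ i) (x r) = w}) :
    finrank k (ker (a - 1)) ≤ S.card := by
  have h := finrank_le_finrank_range_sub_one_pow_add_sum_min a S x m hsp 1
  have hmin : ∑ r ∈ S, min (m r) 1 ≤ S.card :=
    (Finset.sum_le_sum fun r _ => min_le_right (m r) 1).trans (by simp)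
  have := (a - 1).finrank_range_add_finrank_ker
  rw [pow_one] at h
  omega

end Rank

theorem sum_Icc_le_sum_Icc_of_eq_zero {φ : ℕ → ℕ} {c : ℕ} (hφ : ∀ i, c < i → φ i = 0) (d : ℕ) :
    ∑ i ∈ Finset.Icc 1 d, φ i ≤ ∑ i ∈ Finset.Icc 1 c, φ i := by
  rcases le_total d c with h | h
  · exact Finset.sum_le_sum_of_subset (Finset.Icc_subset_Icc_right h)
  · refine (Finset.sum_subset (Finset.Icc_subset_Icc_right h) fun i hi hi' => hφ i ?_).ge
    simp only [Finset.mem_Icc] at hi hi'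
    omega

theorem sum_Icc_le_sum_Icc_of_sum_tsub_le {m n : ℕ → ℕ} {f u : ℕ}
    (hn : AntitoneOn n (Set.Ici 1)) (hm : ∀ i, f < i → m i = 0)
    (h : ∀ j, ∑ r ∈ Finset.Icc 1 f, (m r - j) ≤ ∑ r ∈ Finset.Icc 1 u, (n r - j)) (c : ℕ) :
    ∑ r ∈ Finset.Icc 1 c, m r ≤ ∑ r ∈ Finset.Icc 1 c, n r := by
  set j := n (c + 1)
  have hcj : ∑ r ∈ Finset.Icc 1 c, n r = c * j + ∑ r ∈ Finset.Icc 1 c, (n r - j) := by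
    have hle : ∀ r ∈ Finset.Icc 1 c, j ≤ n r := fun r hr => by
      simp only [Finset.mem_Icc] at hr
      exact hn (Set.mem_Ici.mpr hr.1) (Set.mem_Ici.mpr (by omega)) (by omega)
    rw [← Finset.sum_congr rfl fun r hr => Nat.add_sub_of_le (hle r hr),
      Finset.sum_add_distrib]
    simp
  have hn_tail : ∀ r, c < r → n r - j = 0 := fun r hr =>
    Nat.sub_eq_zero_of_le (hn (Set.mem_Ici.mpr (by omega)) (Set.mem_Ici.mpr (by omega)) hr)
  calc ∑ r ∈ Finset.Icc 1 c, m r ≤ ∑ r ∈ Finset.Icc 1 c, (j + (m r - j)) :=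
        Finset.sum_le_sum fun r _ => by omega
    _ = c * j + ∑ r ∈ Finset.Icc 1 c, (m r - j) := by simp [Finset.sum_add_distrib]
    _ ≤ c * j + ∑ r ∈ Finset.Icc 1 f, (m r - j) :=
        Nat.add_le_add_left (sum_Icc_le_sum_Icc_of_eq_zero (fun i hi => by simp [hm i hi]) c) _
    _ ≤ c * j + ∑ r ∈ Finset.Icc 1 c, (n r - j) :=
        Nat.add_le_add_left ((h j).trans (sum_Icc_le_sum_Icc_of_eq_zero hn_tail u)) _
    _ = ∑ r ∈ Finset.Icc 1 c, n r := hcj.symm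

theorem stmt_0_general {k : Type*} [Field k] {V : Type*} [AddCommGroup V] [Module k V]
    [FiniteDimensional k V]
    (g : V ≃ₗ[k] V)
    (u : ℕ) (n : ℕ → ℕ)
    (hn1 : ∀ r ∈ Finset.Icc 1 u, 1 ≤ n r)
    (hn_mono : ∀ i j, 1 ≤ i → i ≤ j → j ≤ u → n j ≤ n i)
    (hn0 : ∀ i, u < i → n i = 0)
    (v : ℕ → ℕ → V)
    (hv_li : LinearIndependent k
      (fun q : {q : ℕ × ℕ // 1 ≤ q.1 ∧ q.1 ≤ u ∧ q.2 < n q.1} => v q.1.1 q.1.2))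
    (hv_sp : Submodule.span k
      (Set.range fun q : {q : ℕ × ℕ // 1 ≤ q.1 ∧ q.1 ≤ u ∧ q.2 < n q.1} => v q.1.1 q.1.2) = ⊤)
    (hv_step : ∀ r, 1 ≤ r → r ≤ u → ∀ i, i + 2 ≤ n r → g (v r i) - v r i = v r (i + 1))
    (hv_end : ∀ r, 1 ≤ r → r ≤ u → g (v r (n r - 1)) - v r (n r - 1) = 0)
    (f : ℕ) (m : ℕ → ℕ)
    (hm0 : ∀ i, f < i → m i = 0)
    (hm_sum : ∑ r ∈ Finset.Icc 1 f, m r = Module.finrank k V)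
    (x : ℕ → V)
    (hx_sp : Submodule.span k
      (Set.range fun q : {q : ℕ × ℕ // 1 ≤ q.1 ∧ q.1 ≤ f ∧ q.2 < m q.1} =>
        (g ^ q.1.2) (x q.1.1)) = ⊤) :
    (∀ c, 1 ≤ c → ∑ r ∈ Finset.Icc 1 c, m r ≤ ∑ r ∈ Finset.Icc 1 c, n r) ∧ u ≤ f := by
  set a : Module.End k V := g.toLinearMap
  have hstep : ∀ r ∈ Finset.Icc 1 u, ∀ i, i + 1 < n r → (a - 1) (v r i) = v r (i + 1) :=
    fun r hr i hi => hv_step r (Finset.mem_Icc.mp hr).1 (Finset.mem_Icc.mp hr).2 i hi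
  have hend : ∀ r ∈ Finset.Icc 1 u, (a - 1) (v r (n r - 1)) = 0 :=
    fun r hr => hv_end r (Finset.mem_Icc.mp hr).1 (Finset.mem_Icc.mp hr).2
  have hv_top : ⊤ ≤ span k {w | ∃ r ∈ Finset.Icc 1 u, ∃ i < n r, v r i = w} :=
    hv_sp.ge.trans <| span_mono <| Set.range_subset_iff.mpr fun q =>
      ⟨q.1.1, Finset.mem_Icc.mpr ⟨q.2.1, q.2.2.1⟩, q.1.2, q.2.2.2, rfl⟩
  have hx_top : ⊤ ≤ span k {w | ∃ r ∈ Finset.Icc 1 f, ∃ i < m r, (a ^ i) (x r) = w} :=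
    hx_sp.ge.trans <| span_mono <| Set.range_subset_iff.mpr fun q =>
      ⟨q.1.1, Finset.mem_Icc.mpr ⟨q.2.1, q.2.2.1⟩, q.1.2, q.2.2.2,
        by rw [Module.End.pow_apply, LinearEquiv.pow_apply]; rfl⟩
  have hn_anti : AntitoneOn n (Set.Ici 1) := fun i hi j _ hij => by
    rcases le_or_gt j u with hju | hju
    · exact hn_mono i j hi hij hju
    · simp [hn0 j hju]
  have htail : ∀ j, ∑ r ∈ Finset.Icc 1 f, (m r - j) ≤ ∑ r ∈ Finset.Icc 1 u, (n r - j) :=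
    fun j => (sum_tsub_le_finrank_range_sub_one_pow a _ x m hx_top hm_sum j).trans
      (finrank_range_pow_le_sum_tsub _ _ n v hstep hend hv_top j)
  refine ⟨fun c _ => sum_Icc_le_sum_Icc_of_sum_tsub_le hn_anti hm0 htail c, ?_⟩
  have hbottom : LinearIndependent k (fun r : Finset.Icc 1 u => v r (n r - 1)) := by
    refine hv_li.comp (fun r : Finset.Icc 1 u => ⟨(r, n r - 1), (Finset.mem_Icc.mp r.2).1,
      (Finset.mem_Icc.mp r.2).2, Nat.sub_one_lt_of_lt (hn1 r r.2)⟩) fun r s hrs => ?_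
    exact Subtype.ext (congrArg (fun q => q.1.1) hrs)
  calc u = Fintype.card (Finset.Icc 1 u) := by simp
    _ ≤ Module.finrank k (LinearMap.ker (a - 1)) :=
      hbottom.card_le_finrank_of_forall_mem fun r => LinearMap.mem_ker.mpr (hend r r.2)
    _ ≤ (Finset.Icc 1 f).card := finrank_ker_sub_one_le_card a _ x m hx_top
    _ = f := by simp

/-- Proposition 3.1: let `g ∈ GL(V)` be unipotent with Jordan blocks of sizes
`n_1 ≥ … ≥ n_u ≥ 1` (encoded by a Jordan basis `v_{r,i}`, `r ∈ [1,u]`, `i ∈ [0, n_r − 1]`,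
with `(g−1) v_{r,i} = v_{r,i+1}` and `(g−1) v_{r,n_r−1} = 0`), let `m_1 ≥ … ≥ m_f ≥ 1` with
`m_1 + … + m_f = dim V`, and suppose vectors `x_1, …, x_f` exist such that the vectors
`g^i x_r` (`r ∈ [1,f]`, `i ∈ [0, m_r − 1]`) form a basis of `V`. Setting `n_i = 0` for `i > u`
and `m_i = 0` for `i > f`, then `m_1 + … + m_c ≤ n_1 + … + n_c` for every `c ≥ 1`;
in particular `u ≤ f`. -/
theorem stmt_0 {k : Type*} [Field k] {V : Type*} [AddCommGroup V] [Module k V]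
    [FiniteDimensional k V]
    (g : V ≃ₗ[k] V)
    (hg_unip : IsNilpotent (g.toLinearMap - LinearMap.id : Module.End k V))
    (u : ℕ) (n : ℕ → ℕ)
    (hn1 : ∀ r ∈ Finset.Icc 1 u, 1 ≤ n r)
    (hn_mono : ∀ i j, 1 ≤ i → i ≤ j → j ≤ u → n j ≤ n i)
    (hn0 : ∀ i, u < i → n i = 0)
    (v : ℕ → ℕ → V)
    (hv_li : LinearIndependent k
      (fun q : {q : ℕ × ℕ // 1 ≤ q.1 ∧ q.1 ≤ u ∧ q.2 < n q.1} => v q.1.1 q.1.2))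
    (hv_sp : Submodule.span k
      (Set.range fun q : {q : ℕ × ℕ // 1 ≤ q.1 ∧ q.1 ≤ u ∧ q.2 < n q.1} => v q.1.1 q.1.2) = ⊤)
    (hv_step : ∀ r, 1 ≤ r → r ≤ u → ∀ i, i + 2 ≤ n r → g (v r i) - v r i = v r (i + 1))
    (hv_end : ∀ r, 1 ≤ r → r ≤ u → g (v r (n r - 1)) - v r (n r - 1) = 0)
    (f : ℕ) (m : ℕ → ℕ)
    (hm1 : ∀ r ∈ Finset.Icc 1 f, 1 ≤ m r)
    (hm_mono : ∀ i j, 1 ≤ i → i ≤ j → j ≤ f → m j ≤ m i)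
    (hm0 : ∀ i, f < i → m i = 0)
    (hm_sum : ∑ r ∈ Finset.Icc 1 f, m r = Module.finrank k V)
    (x : ℕ → V)
    (hx_li : LinearIndependent k
      (fun q : {q : ℕ × ℕ // 1 ≤ q.1 ∧ q.1 ≤ f ∧ q.2 < m q.1} => (g ^ q.1.2) (x q.1.1)))
    (hx_sp : Submodule.span k
      (Set.range fun q : {q : ℕ × ℕ // 1 ≤ q.1 ∧ q.1 ≤ f ∧ q.2 < m q.1} =>
        (g ^ q.1.2) (x q.1.1)) = ⊤) :
    (∀ c, 1 ≤ c → ∑ r ∈ Finset.Icc 1 c, m r ≤ ∑ r ∈ Finset.Icc 1 c, n r) ∧ u ≤ f :=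
  stmt_0_general g u n hn1 hn_mono hn0 v hv_li hv_sp hv_step hv_end f m hm0 hm_sum x hx_sp
end

section
/- Let k be a field, V a finite-dimensional k-vector space, g ∈ GL(V), and N := g − 1 ∈ End(V). Let m_1 ≥ m_2 ≥ … ≥ m_f ≥ 1 be integers with m_1 + … + m_f = dim V, and suppose there exist vectors x_1, …, x_f in V such that the vectors g^i x_r (r ∈ [1,f], i ∈ [0, m_r − 1]) form a basis of V. Then for every integer k ≥ 0, dim N^k(V) ≥ Σ_{r=1}^{f} max(m_r − k, 0). -/
/-!
Reducing `X ^ i` modulo `(X - 1) ^ K` shows that, modulo `N ^ K (V)`, every `g ^ i x_r` with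
`i < m_r` lies in the span of the `g ^ t x_r` with `t < min m_r K`. Hence `V` is the sum of
`N ^ K (V)` and a subspace spanned by `∑ min m_r K` vectors, and comparing with
`dim V = ∑ m_r = ∑ (m_r - K) + ∑ min m_r K` gives the bound.
-/

open Polynomial Submodule

section
variable {R M : Type*} [CommRing R] [AddCommGroup M] [Module R M] (g : Module.End R M) (x : M)
  {s : Set M}

theorem aeval_apply_mem_span_of_degree_lt {n : ℕ} (hs : ∀ t < n, (g ^ t) x ∈ s) {p : R[X]}
    (hp : p.degree < n) : aeval g p x ∈ span R s := by
  classical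
  have hmem : p ∈ span R ↑((Finset.range n).image fun t => (X ^ t : R[X])) := by
    rw [← degreeLT_eq_span_X_pow]; exact mem_degreeLT.2 hp
  have := mem_map_of_mem (f := LinearMap.applyₗ x ∘ₗ (aeval g).toLinearMap) hmem
  rw [map_span] at this
  refine span_mono ?_ this
  rintro _ ⟨_, hX, rfl⟩
  obtain ⟨t, ht, rfl⟩ := Finset.mem_image.1 hX
  simpa using hs t (Finset.mem_range.1 ht)

theorem aeval_apply_mem_range_sub_one_pow_sup_span [Nontrivial R] {K : ℕ}
    (hs : ∀ t < K, (g ^ t) x ∈ s) (p : R[X]) :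
    aeval g p x ∈ LinearMap.range ((g - 1) ^ K) ⊔ span R s := by
  have hdeg : (p %ₘ (X - C 1) ^ K).degree < K :=
    (degree_modByMonic_lt p ((monic_X_sub_C 1).pow K)).trans_le
      ((degree_pow_le _ K).trans (by rw [degree_X_sub_C, nsmul_one]))
  rw [← modByMonic_add_div p ((X - C 1) ^ K), map_add, map_mul, LinearMap.add_apply,
    Module.End.mul_apply]
  refine add_mem (mem_sup_right (aeval_apply_mem_span_of_degree_lt g x hs hdeg))
    (mem_sup_left ⟨aeval g (p /ₘ (X - C 1) ^ K) x, by simp⟩)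

theorem pow_apply_mem_range_sub_one_pow_sup_span [Nontrivial R] {K m i : ℕ}
    (hs : ∀ t < min m K, (g ^ t) x ∈ s) (hi : i < m) :
    (g ^ i) x ∈ LinearMap.range ((g - 1) ^ K) ⊔ span R s := by
  by_cases hiK : i < K
  · exact mem_sup_right (subset_span (hs i (lt_min hi hiK)))
  · rw [min_eq_right (by omega)] at hs
    rw [← aeval_X_pow (R := R) g]
    exact aeval_apply_mem_range_sub_one_pow_sup_span g x hs _

end

theorem finrank_le_finrank_add_card_of_sup_span_eq_top {K V : Type*} [DivisionRing K]
    [AddCommGroup V] [Module K V] [FiniteDimensional K V] {W : Submodule K V} {s : Finset V}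
    (h : W ⊔ span K ↑s = ⊤) : Module.finrank K V ≤ Module.finrank K W + s.card :=
  calc Module.finrank K V = Module.finrank K ↥(W ⊔ span K ↑s) := by rw [h, finrank_top]
    _ ≤ Module.finrank K W + s.card :=
      (finrank_add_le_finrank_add_finrank _ _).trans
        (by gcongr; exact finrank_span_finset_le_card s)

theorem stmt_1_general {k : Type*} [Field k] {V : Type*} [AddCommGroup V] [Module k V]
    [FiniteDimensional k V]
    (g : V ≃ₗ[k] V) (f : ℕ) (m : ℕ → ℕ)
    (hmsum : ∑ r ∈ Finset.Icc 1 f, m r = Module.finrank k V)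
    (x : ℕ → V)
    (hxsp : Submodule.span k
      (Set.range fun q : {q : ℕ × ℕ // 1 ≤ q.1 ∧ q.1 ≤ f ∧ q.2 < m q.1} =>
        (g ^ q.1.2) (x q.1.1)) = ⊤)
    (K : ℕ) :
    ∑ r ∈ Finset.Icc 1 f, (m r - K) ≤
      Module.finrank k
        (LinearMap.range ((g.toLinearMap - LinearMap.id : Module.End k V) ^ K)) := by
  classical
  rw [← Module.End.one_eq_id]
  set G : Module.End k V := g.toLinearMap
  have hpow (i : ℕ) (v : V) : (g ^ i) v = (G ^ i) v := by
    rw [LinearEquiv.pow_apply, Module.End.pow_apply]; rfl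
  let U : Finset V := (Finset.Icc 1 f).biUnion fun r =>
    (Finset.range (min (m r) K)).image fun t => (G ^ t) (x r)
  have hsup : LinearMap.range ((G - 1) ^ K) ⊔ span k ↑U = ⊤ := by
    rw [eq_top_iff, ← hxsp, span_le]
    rintro _ ⟨⟨⟨r, i⟩, hr1, hrf, hi⟩, rfl⟩
    change (g ^ i) (x r) ∈ _
    rw [hpow]
    refine pow_apply_mem_range_sub_one_pow_sup_span G (x r) (fun t ht => ?_) hi
    exact Finset.mem_biUnion.2 ⟨r, Finset.mem_Icc.2 ⟨hr1, hrf⟩,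
      Finset.mem_image_of_mem _ (Finset.mem_range.2 ht)⟩
  have hU : U.card ≤ ∑ r ∈ Finset.Icc 1 f, min (m r) K :=
    Finset.card_biUnion_le.trans (Finset.sum_le_sum fun r _ =>
      Finset.card_image_le.trans_eq (Finset.card_range _))
  have hsplit : Module.finrank k V =
      ∑ r ∈ Finset.Icc 1 f, (m r - K) + ∑ r ∈ Finset.Icc 1 f, min (m r) K := by
    simp only [← Finset.sum_add_distrib, Nat.sub_add_min_cancel, hmsum]
  have := finrank_le_finrank_add_card_of_sup_span_eq_top hsup
  omega

/-- if `g ∈ GL(V)`, `N := g − 1`, and there are vectors `x_1, …, x_f` such that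
the vectors `g^i x_r` (`r ∈ [1,f]`, `i ∈ [0, m_r − 1]`) form a basis of `V`, where
`m_1 ≥ … ≥ m_f ≥ 1` and `m_1 + … + m_f = dim V`, then for every `K ≥ 0`,
`dim N^K(V) ≥ Σ_{r=1}^f max(m_r − K, 0)` (in `ℕ`, `m r - K` is the truncated difference). -/
theorem stmt_1 {k : Type*} [Field k] {V : Type*} [AddCommGroup V] [Module k V]
    [FiniteDimensional k V]
    (g : V ≃ₗ[k] V) (f : ℕ) (m : ℕ → ℕ)
    (hm1 : ∀ r ∈ Finset.Icc 1 f, 1 ≤ m r)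
    (hmono : ∀ i j, 1 ≤ i → i ≤ j → j ≤ f → m j ≤ m i)
    (hmsum : ∑ r ∈ Finset.Icc 1 f, m r = Module.finrank k V)
    (x : ℕ → V)
    (hxli : LinearIndependent k
      (fun q : {q : ℕ × ℕ // 1 ≤ q.1 ∧ q.1 ≤ f ∧ q.2 < m q.1} => (g ^ q.1.2) (x q.1.1)))
    (hxsp : Submodule.span k
      (Set.range fun q : {q : ℕ × ℕ // 1 ≤ q.1 ∧ q.1 ≤ f ∧ q.2 < m q.1} =>
        (g ^ q.1.2) (x q.1.1)) = ⊤)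
    (K : ℕ) :
    ∑ r ∈ Finset.Icc 1 f, (m r - K) ≤
      Module.finrank k
        (LinearMap.range ((g.toLinearMap - LinearMap.id : Module.End k V) ^ K)) :=
  stmt_1_general g f m hmsum x hxsp K
end

section
/- Let p_* = (p_1 ≥ p_2 ≥ … ≥ p_σ) ∈ 𝒫_n and let ψ be the associated function. Then: ψ(1) = 1; ψ(2a) + ψ(2a+1) = 0 whenever 1 ≤ 2a < 2a+1 ≤ σ; for every odd h ∈ [1,σ], Σ_{r=1}^{h} ψ(r) = 1; for every even h ∈ [1,σ], Σ_{r=1}^{h} ψ(r) = 1 + ψ(h); and Σ_{t=1}^{σ} ψ(t) = κ_σ. -/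
/-!
Because `p` is nonincreasing, both "`p_x < p_{2a}` for all `x > 2a`" and "`p_{2a+1} < p_x` for all
`x < 2a+1`" reduce to the single comparison `p_{2a+1} < p_{2a}`. Hence `ψ(2a) = -1` exactly when
`ψ(2a+1) = 1`, and the pairs `(2a, 2a+1)` cancel. The conditions defining `ψ(1) = 1` and, for even
`σ`, `ψ(σ) = -1` are vacuous, which gives the partial sums by telescoping over the pairs.
-/

/-- `p` represents a sequence `p_1 ≥ p_2 ≥ … ≥ p_σ` of integers `≥ 1` with sum `n`
(only the values `p t` for `t ∈ [1,σ]` matter). -/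
def IsPartitionOf (n σ : ℕ) (p : ℕ → ℕ) : Prop :=
  1 ≤ σ ∧ (∀ t ∈ Finset.Icc 1 σ, 1 ≤ p t) ∧
    (∀ i j, 1 ≤ i → i ≤ j → j ≤ σ → p j ≤ p i) ∧ (∑ t ∈ Finset.Icc 1 σ, p t) = n

/-- The function ψ : [1,σ] → {−1,0,1} associated to a partition `p_* ∈ 𝒫_n`:
`ψ(t) = 1` if `t` is odd and `p_t < p_x` for all `x ∈ [1,t−1]`;
`ψ(t) = −1` if `t` is even and `p_x < p_t` for all `x ∈ [t+1,σ]`;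
`ψ(t) = 0` otherwise. -/
def psiFun (σ : ℕ) (p : ℕ → ℕ) (t : ℕ) : ℤ :=
  if Odd t ∧ ∀ x ∈ Finset.Ico 1 t, p t < p x then 1
  else if Even t ∧ ∀ x ∈ Finset.Icc (t + 1) σ, p x < p t then -1
  else 0

open Finset

lemma IsPartitionOf.antitoneOn {n σ : ℕ} {p : ℕ → ℕ} (hp : IsPartitionOf n σ p) :
    AntitoneOn p (Set.Icc 1 σ) :=
  fun i hi j hj hij => hp.2.2.1 i j hi.1 hij hj.2

lemma AntitoneOn.forall_Icc_succ_lt_iff {σ t : ℕ} {p : ℕ → ℕ}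
    (hp : AntitoneOn p (Set.Icc 1 σ)) (ht : 1 ≤ t) (htσ : t + 1 ≤ σ) :
    (∀ x ∈ Icc (t + 1) σ, p x < p t) ↔ p (t + 1) < p t := by
  refine ⟨fun h => h (t + 1) (mem_Icc.mpr ⟨le_rfl, htσ⟩), fun h x hx => ?_⟩
  rw [mem_Icc] at hx
  exact (hp ⟨by omega, htσ⟩ ⟨by omega, hx.2⟩ hx.1).trans_lt h

lemma AntitoneOn.forall_Ico_succ_gt_iff {σ t : ℕ} {p : ℕ → ℕ}
    (hp : AntitoneOn p (Set.Icc 1 σ)) (ht : 1 ≤ t) (htσ : t + 1 ≤ σ) :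
    (∀ x ∈ Ico 1 (t + 1), p (t + 1) < p x) ↔ p (t + 1) < p t := by
  refine ⟨fun h => h t (mem_Ico.mpr ⟨ht, by omega⟩), fun h x hx => ?_⟩
  rw [mem_Ico] at hx
  exact h.trans_le (hp ⟨hx.1, by omega⟩ ⟨ht, by omega⟩ (by omega))

namespace psiFun

variable {σ : ℕ} {p : ℕ → ℕ}

lemma one : psiFun σ p 1 = 1 := by
  simp [psiFun]

lemma top_of_even (hσ : Even σ) : psiFun σ p σ = -1 := by
  simp [psiFun, Nat.not_odd_iff_even.mpr hσ, hσ]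

variable (hp : AntitoneOn p (Set.Icc 1 σ))
include hp

lemma two_mul_add_two_mul_add_one {a : ℕ} (ha : 1 ≤ 2 * a) (haσ : 2 * a + 1 ≤ σ) :
    psiFun σ p (2 * a) + psiFun σ p (2 * a + 1) = 0 := by
  have h_not_odd : ¬Odd (2 * a) := Nat.not_odd_iff_even.mpr (even_two_mul a)
  have h_not_even : ¬Even (2 * a + 1) := Nat.not_even_iff_odd.mpr (odd_two_mul_add_one a)
  simp only [psiFun, h_not_odd, h_not_even, even_two_mul, odd_two_mul_add_one, true_and,
    false_and, if_false, hp.forall_Icc_succ_lt_iff ha haσ, hp.forall_Ico_succ_gt_iff ha haσ]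
  split_ifs <;> norm_num

lemma sum_Icc_odd {a : ℕ} (haσ : 2 * a + 1 ≤ σ) :
    ∑ r ∈ Icc 1 (2 * a + 1), psiFun σ p r = 1 := by
  induction a with
  | zero => simpa using one
  | succ b ih =>
    rw [show 2 * (b + 1) + 1 = 2 * b + 1 + 1 + 1 by ring, sum_Icc_succ_top (by omega),
      sum_Icc_succ_top (by omega), ih (by omega), add_assoc,
      show 2 * b + 1 + 1 = 2 * (b + 1) by ring, two_mul_add_two_mul_add_one hp (by omega) haσ,
      add_zero]

lemma sum_Icc_even {h : ℕ} (h1 : 1 ≤ h) (hσ : h ≤ σ) (he : Even h) :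
    ∑ r ∈ Icc 1 h, psiFun σ p r = 1 + psiFun σ p h := by
  obtain ⟨a, rfl⟩ := he
  rw [show a + a = 2 * (a - 1) + 1 + 1 by omega, sum_Icc_succ_top (by omega),
    sum_Icc_odd hp (by omega)]

lemma sum_Icc_top : ∑ t ∈ Icc 1 σ, psiFun σ p t = ((σ % 2 : ℕ) : ℤ) := by
  rcases Nat.even_or_odd σ with he | ⟨a, rfl⟩
  · rcases Nat.eq_zero_or_pos σ with rfl | hσ
    · simp
    rw [sum_Icc_even hp hσ le_rfl he, top_of_even he, Nat.even_iff.mp he]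
    rfl
  · rw [sum_Icc_odd hp le_rfl]
    omega

end psiFun

/-- basic properties of ψ. -/
theorem stmt_3 (n σ : ℕ) (p : ℕ → ℕ) (hp : IsPartitionOf n σ p) :
    psiFun σ p 1 = 1 ∧
    (∀ a : ℕ, 1 ≤ 2 * a → 2 * a + 1 ≤ σ →
      psiFun σ p (2 * a) + psiFun σ p (2 * a + 1) = 0) ∧
    (∀ h ∈ Finset.Icc 1 σ, Odd h → ∑ r ∈ Finset.Icc 1 h, psiFun σ p r = 1) ∧
    (∀ h ∈ Finset.Icc 1 σ, Even h →
      ∑ r ∈ Finset.Icc 1 h, psiFun σ p r = 1 + psiFun σ p h) ∧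
    (∑ t ∈ Finset.Icc 1 σ, psiFun σ p t) = ((σ % 2 : ℕ) : ℤ) := by
  have hanti := hp.antitoneOn
  refine ⟨psiFun.one, fun a => psiFun.two_mul_add_two_mul_add_one hanti, ?_, ?_,
    psiFun.sum_Icc_top hanti⟩
  · rintro h hh ⟨a, rfl⟩
    exact psiFun.sum_Icc_odd hanti (mem_Icc.mp hh).2
  · intro h hh he
    exact psiFun.sum_Icc_even hanti (mem_Icc.mp hh).1 (mem_Icc.mp hh).2 he
end

section
/- Let p_* = (p_1 ≥ p_2 ≥ … ≥ p_σ) ∈ 𝒫_n with associated function ψ, let κ ∈ {0,1}, and assume that if κ = 0 then σ is even. Set q_r = 2p_r for r ∈ [1,σ] and q_{σ+1} = κ; set ψ(σ+1) = −1 if κ = 1 and σ is odd, and ψ(σ+1) = 0 otherwise; and set π_r = q_r + ψ(r) for r ∈ [1, σ+1]. For k ≥ 0 define Λ_k = Σ_{r=1}^{σ+1} max(q_r − k, 0), define Λ'_k = Λ_k + 1 if k > 0 and there exists an odd d ∈ [1,σ] with q_{d+1} ≤ k ≤ q_d, and Λ'_k = Λ_k otherwise, and define Λ''_k = Σ_{r=1}^{σ+1}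 max(π_r − k, 0). Then Λ''_k = Λ'_k for every k ≥ 0. -/
/-- `q_r = 2 p_r` for `r ∈ [1,σ]`, and `q_{σ+1} = κ`. -/
def qSeq (κ σ : ℕ) (p : ℕ → ℕ) (r : ℕ) : ℕ :=
  if r = σ + 1 then κ else 2 * p r

/-- ψ extended to `σ+1`: `ψ(σ+1) = −1` if `κ = 1` and `σ` is odd, `ψ(σ+1) = 0` otherwise. -/
def psiExt (κ σ : ℕ) (p : ℕ → ℕ) (r : ℕ) : ℤ :=
  if r = σ + 1 then (if κ = 1 ∧ Odd σ then -1 else 0) else psiFun σ p r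

open scoped Classical

/-
`ψ` is a backward difference: put `g t = 1` when `t` is even and ends a block of equal parts
(`0` and `σ` counting as block ends) and `g t = 0` otherwise; then `ψ(t) = g(t-1) - g(t)` on
`[1,σ]`. The term `max(q_r + ψ(r) - k, 0) - max(q_r - k, 0)` only sees whether `q_r ≥ k` (for the
`+1`) resp. `q_r > k` (for the `-1`), and as `q` is nonincreasing these hold on initial segments
`[1,J(k)]` resp. `[1,J(k+1)]`. So `Λ''_k - Λ_k` telescopes, up to the last term, to
`g 0 - g(J(k+1)) + Σ_{J(k+1) ≤ s < J(k)} g s`. All `q_r` with `J(k+1) < r ≤ J(k)` equal `k`, so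
no block ends strictly between `J(k+1)` and `J(k)`, while `J(k+1)` itself ends one. The result is
`1` unless `J(k+1) = J(k)` is even, i.e. exactly when `[J(k+1), J(k)]` contains an odd index,
which is the condition defining `Λ'_k`; at `k = 0` the term `ψ(σ+1)` cancels it.
-/

open Finset

theorem exists_odd_mem_Icc_iff {a b : ℕ} (hab : a ≤ b) :
    (∃ d ∈ Icc a b, Odd d) ↔ ¬(a = b ∧ Even b) := by
  simp only [mem_Icc, Nat.odd_iff, Nat.even_iff]
  constructor
  · rintro ⟨d, hd, hodd⟩ ⟨rfl, heven⟩
    omega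
  · intro h
    rcases Nat.mod_two_eq_zero_or_one a with ha | ha
    · exact ⟨a + 1, by omega, by omega⟩
    · exact ⟨a, by omega, ha⟩

theorem sum_Icc_one_eq_sum_range {M : Type*} [AddCommMonoid M] (g : ℕ → M) (j : ℕ) :
    ∑ r ∈ Icc 1 j, g r = ∑ s ∈ range j, g (s + 1) := by
  induction j with
  | zero => simp
  | succ j ih => rw [sum_Icc_succ_top (by omega), ih, sum_range_succ]

theorem max_add_sub_sub_eq (q k : ℕ) (x y : ℤ) (hx : 0 ≤ x) (hy : 0 ≤ y) (hxy : x + y ≤ 1) :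
    max ((q : ℤ) + (x - y) - k) 0
      = max ((q : ℤ) - k) 0 + ((if k ≤ q then x else 0) - (if k + 1 ≤ q then y else 0)) := by
  split_ifs <;> omega

noncomputable def lastIndexGE (f : ℕ → ℕ) (σ m : ℕ) : ℕ :=
  Nat.findGreatest (fun r => m ≤ f r) σ

section LastIndexGE

variable {f : ℕ → ℕ} {σ : ℕ}

theorem lastIndexGE_le (m : ℕ) : lastIndexGE f σ m ≤ σ :=
  Nat.findGreatest_le σ

theorem lastIndexGE_antitone : Antitone (lastIndexGE f σ) :=
  fun _ _ h => Nat.findGreatest_mono (fun _ hr => h.trans hr) le_rfl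

theorem lastIndexGE_eq_self {m : ℕ} (h : m ≤ f σ) : lastIndexGE f σ m = σ :=
  Nat.findGreatest_eq h

theorem le_apply_lastIndexGE {m : ℕ} (h : lastIndexGE f σ m ≠ 0) :
    m ≤ f (lastIndexGE f σ m) :=
  Nat.findGreatest_of_ne_zero (P := fun r => m ≤ f r) rfl h

theorem apply_lt_of_lastIndexGE_lt {m r : ℕ} (h : lastIndexGE f σ m < r) (hr : r ≤ σ) :
    f r < m :=
  not_le.mp (Nat.findGreatest_is_greatest (P := fun r => m ≤ f r) h hr)

theorem le_lastIndexGE_iff (hf : AntitoneOn f (Set.Icc 1 σ)) {m r : ℕ} (hr : r ∈ Icc 1 σ) :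
    r ≤ lastIndexGE f σ m ↔ m ≤ f r := by
  rw [mem_Icc] at hr
  refine ⟨fun h => ?_, Nat.le_findGreatest (P := fun r => m ≤ f r) hr.2⟩
  have hJ : lastIndexGE f σ m ≠ 0 := by omega
  exact (le_apply_lastIndexGE hJ).trans
    (hf ⟨hr.1, hr.2⟩ ⟨by omega, lastIndexGE_le m⟩ h)

theorem filter_Icc_le_apply (hf : AntitoneOn f (Set.Icc 1 σ)) (m : ℕ) :
    {r ∈ Icc 1 σ | m ≤ f r} = Icc 1 (lastIndexGE f σ m) := by
  ext r
  simp only [mem_filter]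
  constructor
  · rintro ⟨hr, hm⟩
    exact mem_Icc.mpr ⟨(mem_Icc.mp hr).1, (le_lastIndexGE_iff hf hr).mpr hm⟩
  · intro hr
    have hrσ : r ∈ Icc 1 σ :=
      mem_Icc.mpr ⟨(mem_Icc.mp hr).1, (mem_Icc.mp hr).2.trans (lastIndexGE_le m)⟩
    exact ⟨hrσ, (le_lastIndexGE_iff hf hrσ).mp (mem_Icc.mp hr).2⟩

end LastIndexGE

/-- `t` ends a maximal run of equal values of `f` on `[1,σ]`; `0` and `σ` count as block ends,
as if `f 0 = ∞` and `f (σ + 1) = 0`. -/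
def IsBlockEnd (σ : ℕ) (f : ℕ → ℕ) (t : ℕ) : Prop :=
  t = 0 ∨ t = σ ∨ f (t + 1) < f t

noncomputable def evenBlockEnd (σ : ℕ) (f : ℕ → ℕ) (t : ℕ) : ℤ :=
  if Even t ∧ IsBlockEnd σ f t then 1 else 0

section Blocks

variable {f : ℕ → ℕ} {σ : ℕ}

theorem evenBlockEnd_zero : evenBlockEnd σ f 0 = 1 := by
  simp [evenBlockEnd, IsBlockEnd]

theorem evenBlockEnd_of_isBlockEnd {t : ℕ} (h : IsBlockEnd σ f t) :
    evenBlockEnd σ f t = if Even t then 1 else 0 := by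
  simp [evenBlockEnd, h]

theorem evenBlockEnd_nonneg (t : ℕ) : 0 ≤ evenBlockEnd σ f t := by
  unfold evenBlockEnd; split_ifs <;> norm_num

theorem evenBlockEnd_pred_add_le {t : ℕ} (ht : 1 ≤ t) :
    evenBlockEnd σ f (t - 1) + evenBlockEnd σ f t ≤ 1 := by
  unfold evenBlockEnd
  split_ifs with h₁ h₂ <;> simp only [Nat.even_iff] at * <;> omega

theorem forall_Ico_lt_iff_isBlockEnd (hf : AntitoneOn f (Set.Icc 1 σ)) {t : ℕ}
    (ht : t ∈ Icc 1 σ) :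
    (∀ x ∈ Ico 1 t, f t < f x) ↔ IsBlockEnd σ f (t - 1) := by
  rw [mem_Icc] at ht
  have ht' : t - 1 + 1 = t := by omega
  simp only [IsBlockEnd, ht']
  constructor
  · intro h
    rcases Nat.eq_or_lt_of_le ht.1 with h1 | h1
    · exact Or.inl (by omega)
    · exact Or.inr (Or.inr (h (t - 1) (mem_Ico.mpr ⟨by omega, by omega⟩)))
  · rintro (h | h | h) x hx <;> rw [mem_Ico] at hx
    · omega
    · omega
    · exact h.trans_le (hf ⟨hx.1, by omega⟩ ⟨by omega, by omega⟩ (by omega))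

theorem forall_Icc_lt_iff_isBlockEnd (hf : AntitoneOn f (Set.Icc 1 σ)) {t : ℕ}
    (ht : t ∈ Icc 1 σ) :
    (∀ x ∈ Icc (t + 1) σ, f x < f t) ↔ IsBlockEnd σ f t := by
  rw [mem_Icc] at ht
  constructor
  · intro h
    rcases Nat.eq_or_lt_of_le ht.2 with h1 | h1
    · exact Or.inr (Or.inl h1)
    · exact Or.inr (Or.inr (h (t + 1) (mem_Icc.mpr ⟨le_rfl, h1⟩)))
  · rintro (h | h | h) x hx <;> rw [mem_Icc] at hx
    · omega
    · omega
    · exact (hf ⟨by omega, by omega⟩ ⟨by omega, hx.2⟩ hx.1).trans_lt h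

theorem psiFun_eq_sub (hf : AntitoneOn f (Set.Icc 1 σ)) {t : ℕ} (ht : t ∈ Icc 1 σ) :
    psiFun σ f t = evenBlockEnd σ f (t - 1) - evenBlockEnd σ f t := by
  have ht₁ := (mem_Icc.mp ht).1
  have hpar : Odd t ↔ Even (t - 1) := by rw [Nat.odd_iff, Nat.even_iff]; omega
  have hne : ¬(Even (t - 1) ∧ Even t) := by rw [Nat.even_iff, Nat.even_iff]; omega
  simp only [psiFun, evenBlockEnd, forall_Ico_lt_iff_isBlockEnd hf ht,
    forall_Icc_lt_iff_isBlockEnd hf ht, hpar]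
  split_ifs with h₁ h₂
  · exact absurd ⟨h₁.1, h₂.1⟩ hne
  all_goals norm_num

theorem isBlockEnd_lastIndexGE (m : ℕ) : IsBlockEnd σ f (lastIndexGE f σ m) := by
  by_cases h0 : lastIndexGE f σ m = 0
  · exact Or.inl h0
  by_cases hσ : lastIndexGE f σ m = σ
  · exact Or.inr (Or.inl hσ)
  have hσ' : lastIndexGE f σ m ≤ σ := lastIndexGE_le m
  exact Or.inr (Or.inr ((apply_lt_of_lastIndexGE_lt (lt_add_one _) (by omega)).trans_le
    (le_apply_lastIndexGE h0)))

theorem not_isBlockEnd_of_lt_of_lt (hf : AntitoneOn f (Set.Icc 1 σ)) {k s : ℕ}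
    (h₁ : lastIndexGE f σ (k + 1) < s) (h₂ : s < lastIndexGE f σ k) : ¬IsBlockEnd σ f s := by
  have hσ : lastIndexGE f σ k ≤ σ := lastIndexGE_le k
  have hs : f s < k + 1 := apply_lt_of_lastIndexGE_lt h₁ (by omega)
  have hs' : k ≤ f (s + 1) := (le_lastIndexGE_iff hf (mem_Icc.mpr ⟨by omega, by omega⟩)).mp h₂
  rintro (h | h | h) <;> omega

theorem sum_Ico_evenBlockEnd (hf : AntitoneOn f (Set.Icc 1 σ)) (k : ℕ) :
    ∑ s ∈ Ico (lastIndexGE f σ (k + 1)) (lastIndexGE f σ k), evenBlockEnd σ f s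
      = if lastIndexGE f σ (k + 1) < lastIndexGE f σ k
        then evenBlockEnd σ f (lastIndexGE f σ (k + 1)) else 0 := by
  split_ifs with h
  · refine sum_eq_single_of_mem _ (mem_Ico.mpr ⟨le_rfl, h⟩) fun s hs hne => ?_
    rw [mem_Ico] at hs
    have := not_isBlockEnd_of_lt_of_lt hf (lt_of_le_of_ne hs.1 hne.symm) hs.2
    simp [evenBlockEnd, this]
  · rw [Ico_eq_empty h, sum_empty]

theorem sum_range_evenBlockEnd_sub (hf : AntitoneOn f (Set.Icc 1 σ)) (k : ℕ) :
    ∑ s ∈ range (lastIndexGE f σ k), evenBlockEnd σ f s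
        - ∑ s ∈ range (lastIndexGE f σ (k + 1)), evenBlockEnd σ f (s + 1)
      = if ∃ d ∈ Icc (lastIndexGE f σ (k + 1)) (lastIndexGE f σ k), Odd d then 1 else 0 := by
  have hJ : lastIndexGE f σ (k + 1) ≤ lastIndexGE f σ k := lastIndexGE_antitone (by omega)
  have hshift := sum_range_succ' (evenBlockEnd σ f) (lastIndexGE f σ (k + 1))
  rw [sum_range_succ, evenBlockEnd_zero,
    evenBlockEnd_of_isBlockEnd (isBlockEnd_lastIndexGE _)] at hshift
  rw [← sum_range_add_sum_Ico _ hJ, sum_Ico_evenBlockEnd hf k,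
    evenBlockEnd_of_isBlockEnd (isBlockEnd_lastIndexGE _)]
  simp only [exists_odd_mem_Icc_iff hJ]
  split_ifs at hshift ⊢ <;> simp only [Nat.even_iff] at * <;> omega

theorem sum_max_add_psiFun (hf : AntitoneOn f (Set.Icc 1 σ)) (k : ℕ) :
    ∑ r ∈ Icc 1 σ, max ((f r : ℤ) + psiFun σ f r - k) 0
      = ∑ r ∈ Icc 1 σ, max ((f r : ℤ) - k) 0
        + if ∃ d ∈ Icc (lastIndexGE f σ (k + 1)) (lastIndexGE f σ k), Odd d then 1 else 0 := by
  have hterm : ∀ r ∈ Icc 1 σ, max ((f r : ℤ) + psiFun σ f r - k) 0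
      = max ((f r : ℤ) - k) 0 + ((if k ≤ f r then evenBlockEnd σ f (r - 1) else 0)
          - (if k + 1 ≤ f r then evenBlockEnd σ f r else 0)) := fun r hr => by
    rw [psiFun_eq_sub hf hr]
    exact max_add_sub_sub_eq _ _ _ _ (evenBlockEnd_nonneg _) (evenBlockEnd_nonneg _)
      (evenBlockEnd_pred_add_le (mem_Icc.mp hr).1)
  rw [sum_congr rfl hterm, sum_add_distrib, sum_sub_distrib, ← sum_filter, ← sum_filter,
    filter_Icc_le_apply hf, filter_Icc_le_apply hf, ← sum_range_evenBlockEnd_sub hf k,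
    sum_Icc_one_eq_sum_range _ (lastIndexGE f σ k),
    sum_Icc_one_eq_sum_range _ (lastIndexGE f σ (k + 1))]
  simp only [Nat.add_sub_cancel]

end Blocks

section Extended

variable {κ σ : ℕ} {p : ℕ → ℕ}

theorem qSeq_of_le {r : ℕ} (hr : r ≤ σ) : qSeq κ σ p r = 2 * p r :=
  if_neg (by omega)

theorem qSeq_succ_self : qSeq κ σ p (σ + 1) = κ :=
  if_pos rfl

theorem psiExt_of_le {r : ℕ} (hr : r ≤ σ) : psiExt κ σ p r = psiFun σ p r :=
  if_neg (by omega)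

theorem psiExt_succ_self : psiExt κ σ p (σ + 1) = if κ = 1 ∧ Odd σ then -1 else 0 :=
  if_pos rfl

theorem psiFun_two_mul : psiFun σ (fun r => 2 * p r) = psiFun σ p := by
  ext t
  simp only [psiFun, Nat.mul_lt_mul_left two_pos]

theorem sum_max_qSeq_add_psiExt (hf : AntitoneOn (fun r => 2 * p r) (Set.Icc 1 σ)) (k : ℕ) :
    ∑ r ∈ Icc 1 σ, max ((qSeq κ σ p r : ℤ) + psiExt κ σ p r - k) 0
      = ∑ r ∈ Icc 1 σ, max ((qSeq κ σ p r : ℤ) - k) 0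
        + if ∃ d ∈ Icc (lastIndexGE (fun r => 2 * p r) σ (k + 1))
            (lastIndexGE (fun r => 2 * p r) σ k), Odd d then 1 else 0 := by
  have h := sum_max_add_psiFun hf k
  rw [psiFun_two_mul] at h
  convert h using 3 with r hr r hr <;>
    simp only [qSeq_of_le (mem_Icc.mp hr).2, psiExt_of_le (mem_Icc.mp hr).2]

theorem exists_odd_qSeq_iff (hf : AntitoneOn (fun r => 2 * p r) (Set.Icc 1 σ)) {k : ℕ}
    (hκ : κ ≤ k) :
    (∃ d ∈ Icc 1 σ, Odd d ∧ qSeq κ σ p (d + 1) ≤ k ∧ k ≤ qSeq κ σ p d) ↔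
      ∃ d ∈ Icc (lastIndexGE (fun r => 2 * p r) σ (k + 1)) (lastIndexGE (fun r => 2 * p r) σ k),
        Odd d := by
  constructor
  · rintro ⟨d, hd, hodd, hnext, hdk⟩
    rw [qSeq_of_le (mem_Icc.mp hd).2] at hdk
    refine ⟨d, mem_Icc.mpr ⟨?_, (le_lastIndexGE_iff hf hd).mpr hdk⟩, hodd⟩
    rcases (mem_Icc.mp hd).2.eq_or_lt with rfl | hlt
    · exact lastIndexGE_le _
    · rw [qSeq_of_le (r := d + 1) hlt] at hnext
      by_contra! h
      have : k + 1 ≤ 2 * p (d + 1) :=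
        (le_lastIndexGE_iff hf (mem_Icc.mpr ⟨by omega, hlt⟩)).mp h
      omega
  · rintro ⟨d, hd, hodd⟩
    rw [mem_Icc] at hd
    have hdσ : d ∈ Icc 1 σ := mem_Icc.mpr ⟨hodd.pos, hd.2.trans (lastIndexGE_le k)⟩
    refine ⟨d, hdσ, hodd, ?_, ?_⟩
    · rcases (mem_Icc.mp hdσ).2.eq_or_lt with rfl | hlt
      · rwa [qSeq_succ_self]
      · rw [qSeq_of_le (r := d + 1) hlt]
        have : 2 * p (d + 1) < k + 1 :=
          apply_lt_of_lastIndexGE_lt (f := fun r => 2 * p r) (m := k + 1) (by omega) hlt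
        omega
    · rw [qSeq_of_le (mem_Icc.mp hdσ).2]
      exact (le_lastIndexGE_iff hf hdσ).mp hd.2

end Extended

theorem IsPartitionOf.antitoneOn_two_mul {n σ : ℕ} {p : ℕ → ℕ} (hp : IsPartitionOf n σ p) :
    AntitoneOn (fun r => 2 * p r) (Set.Icc 1 σ) := fun i hi j hj hij => by
  have := hp.2.2.1 i j hi.1 hij hj.2
  show 2 * p j ≤ 2 * p i
  omega

/-- `Λ''_k = Λ'_k` for every `k ≥ 0`, where
`Λ_k = Σ_{r=1}^{σ+1} max(q_r − k, 0)`, `Λ''_k = Σ_{r=1}^{σ+1} max(π_r − k, 0)`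
with `π_r = q_r + ψ(r)`, and `Λ'_k = Λ_k + 1` exactly when `k > 0` and
`q_{d+1} ≤ k ≤ q_d` for some odd `d ∈ [1,σ]`. -/
theorem stmt_4 (n σ : ℕ) (p : ℕ → ℕ) (hp : IsPartitionOf n σ p)
    (κ : ℕ) (hκ : κ ≤ 1) (hκσ : κ = 0 → Even σ) :
    ∀ k : ℕ,
      (∑ r ∈ Finset.Icc 1 (σ + 1), max ((qSeq κ σ p r : ℤ) + psiExt κ σ p r - (k : ℤ)) 0)
        = (∑ r ∈ Finset.Icc 1 (σ + 1), max ((qSeq κ σ p r : ℤ) - (k : ℤ)) 0)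
          + (if 0 < k ∧ ∃ d ∈ Finset.Icc 1 σ, Odd d ∧ qSeq κ σ p (d + 1) ≤ k ∧ k ≤ qSeq κ σ p d
             then 1 else 0) := by
  have hf := hp.antitoneOn_two_mul
  obtain ⟨hσ, hpos, -, -⟩ := hp
  intro k
  rw [sum_Icc_succ_top (by omega), sum_Icc_succ_top (by omega), sum_max_qSeq_add_psiExt hf k,
    qSeq_succ_self, psiExt_succ_self]
  rcases Nat.eq_zero_or_pos k with rfl | hk
  · have hσ₁ : 0 + 1 ≤ 2 * p σ := by have := hpos σ (mem_Icc.mpr ⟨hσ, le_rfl⟩); omega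
    rw [lastIndexGE_eq_self (Nat.zero_le _), lastIndexGE_eq_self (f := fun r => 2 * p r) hσ₁]
    simp only [Icc_self, mem_singleton, exists_eq_left, lt_irrefl, false_and, if_false,
      Nat.cast_zero, sub_zero, add_zero]
    split_ifs <;> simp only [Nat.odd_iff, Nat.even_iff] at * <;> omega
  · have hlast :
        max ((κ : ℤ) + (if κ = 1 ∧ Odd σ then -1 else 0) - k) 0 = max ((κ : ℤ) - k) 0 := by
      split_ifs <;> omega
    simp only [exists_odd_qSeq_iff hf (by omega : κ ≤ k), hk, true_and, hlast]
    rw [add_right_comm]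
    congr -- the two sides differ only in their `Decidable` instances
end

section
/- Let p_* = (p_1 ≥ p_2 ≥ … ≥ p_σ) ∈ 𝒫_n with associated function ψ. Then the sequence (2p_1 + ψ(1), 2p_2 + ψ(2), …, 2p_σ + ψ(σ)) is nonincreasing, every term of it is ≥ 1, and its sum equals 2n + κ_σ. -/
def oddBlockStart (σ : ℕ) (p : ℕ → ℕ) (t : ℕ) : ℤ :=
  if Odd t ∧ (t = 1 ∨ t = σ + 1 ∨ p t < p (t - 1)) then 1 else 0

namespace psiFun

variable {σ : ℕ} {p : ℕ → ℕ} {t : ℕ}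

lemma le_one (σ : ℕ) (p : ℕ → ℕ) (t : ℕ) : psiFun σ p t ≤ 1 := by
  unfold psiFun; split_ifs <;> norm_num

lemma neg_one_le (σ : ℕ) (p : ℕ → ℕ) (t : ℕ) : -1 ≤ psiFun σ p t := by
  unfold psiFun; split_ifs <;> norm_num

lemma succ_nonpos_of_le (hle : p t ≤ p (t + 1)) (ht : 1 ≤ t) : psiFun σ p (t + 1) ≤ 0 := by
  unfold psiFun
  split_ifs with hfirst
  · have := hfirst.2 t (Finset.mem_Ico.2 ⟨ht, t.lt_succ_self⟩)
    omega
  all_goals norm_num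

lemma nonneg_of_le (hle : p t ≤ p (t + 1)) (ht : t + 1 ≤ σ) : 0 ≤ psiFun σ p t := by
  unfold psiFun
  split_ifs with _ hsecond
  · norm_num
  · have := hsecond.2 (t + 1) (Finset.mem_Icc.2 ⟨le_rfl, ht⟩)
    omega
  · norm_num

lemma forall_Ico_lt_iff (hp : AntitoneOn p (Set.Icc 1 σ)) (ht : 1 ≤ t) (htσ : t ≤ σ) :
    (∀ x ∈ Finset.Ico 1 t, p t < p x) ↔ t = 1 ∨ p t < p (t - 1) := by
  constructor
  · intro h
    rcases ht.eq_or_lt with rfl | ht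
    · exact Or.inl rfl
    · exact Or.inr (h (t - 1) (Finset.mem_Ico.2 ⟨by omega, by omega⟩))
  · rintro (rfl | hlt) x hx
    · simp at hx
    · rw [Finset.mem_Ico] at hx
      exact hlt.trans_le (hp ⟨hx.1, by omega⟩ ⟨by omega, by omega⟩ (by omega))

lemma forall_Icc_lt_iff (hp : AntitoneOn p (Set.Icc 1 σ)) (ht : 1 ≤ t) (htσ : t ≤ σ) :
    (∀ x ∈ Finset.Icc (t + 1) σ, p x < p t) ↔ t = σ ∨ p (t + 1) < p t := by
  constructor
  · intro h
    rcases htσ.eq_or_lt with rfl | htσ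
    · exact Or.inl rfl
    · exact Or.inr (h (t + 1) (Finset.mem_Icc.2 ⟨le_rfl, htσ⟩))
  · rintro (rfl | hlt) x hx
    · simp at hx
    · rw [Finset.mem_Icc] at hx
      exact (hp ⟨by omega, by omega⟩ ⟨by omega, hx.2⟩ hx.1).trans_lt hlt

lemma eq_oddBlockStart_sub (hp : AntitoneOn p (Set.Icc 1 σ)) (ht : 1 ≤ t) (htσ : t ≤ σ) :
    psiFun σ p t = oddBlockStart σ p t - oddBlockStart σ p (t + 1) := by
  unfold psiFun oddBlockStart
  simp only [forall_Ico_lt_iff hp ht htσ, forall_Icc_lt_iff hp ht htσ]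
  rcases Nat.even_or_odd t with ht2 | ht2
  · have : Odd (t + 1) := ht2.add_one
    simp only [Nat.not_odd_iff_even.2 ht2, this, ht2, Nat.add_sub_cancel, true_and, false_and,
      if_false]
    split_ifs <;> omega
  · have : ¬Odd (t + 1) := Nat.not_odd_iff_even.2 ht2.add_one
    simp only [ht2, this, Nat.not_even_iff_odd.2 ht2, true_and, false_and, if_false]
    split_ifs <;> omega

lemma sum_Icc (hp : AntitoneOn p (Set.Icc 1 σ)) (hσ : 1 ≤ σ) :
    ∑ t ∈ Finset.Icc 1 σ, psiFun σ p t = ((σ % 2 : ℕ) : ℤ) := by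
  calc ∑ t ∈ Finset.Icc 1 σ, psiFun σ p t
      = -∑ t ∈ Finset.Icc 1 σ, (oddBlockStart σ p (t + 1) - oddBlockStart σ p t) := by
        rw [← Finset.sum_neg_distrib]
        refine Finset.sum_congr rfl fun t ht => ?_
        rw [Finset.mem_Icc] at ht
        rw [eq_oddBlockStart_sub hp ht.1 ht.2, neg_sub]
    _ = oddBlockStart σ p 1 - oddBlockStart σ p (σ + 1) := by
        rw [Finset.sum_Icc_sub hσ, neg_sub]
    _ = ((σ % 2 : ℕ) : ℤ) := by
        rcases Nat.even_or_odd σ with hσ2 | hσ2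
        · simp [oddBlockStart, hσ2.add_one, Nat.even_iff.1 hσ2]
        · simp [oddBlockStart, Nat.not_odd_iff_even.2 hσ2.add_one, Nat.odd_iff.1 hσ2]

end psiFun

lemma two_mul_add_psiFun_succ_le {σ : ℕ} {p : ℕ → ℕ} {i : ℕ} (hle : p (i + 1) ≤ p i)
    (hi : 1 ≤ i) (hiσ : i + 1 ≤ σ) :
    2 * (p (i + 1) : ℤ) + psiFun σ p (i + 1) ≤ 2 * (p i : ℤ) + psiFun σ p i := by
  rcases hle.lt_or_eq with hlt | heq
  · have := psiFun.le_one σ p (i + 1)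
    have := psiFun.neg_one_le σ p i
    omega
  · have := psiFun.succ_nonpos_of_le (σ := σ) heq.ge hi
    have := psiFun.nonneg_of_le heq.ge hiσ
    omega

/-- the sequence `(2p_1 + ψ(1), …, 2p_σ + ψ(σ))` is nonincreasing,
every term is `≥ 1`, and its sum equals `2n + κ_σ`. -/
theorem stmt_5 (n σ : ℕ) (p : ℕ → ℕ) (hp : IsPartitionOf n σ p) :
    (∀ i, 1 ≤ i → i + 1 ≤ σ →
      2 * (p (i + 1) : ℤ) + psiFun σ p (i + 1) ≤ 2 * (p i : ℤ) + psiFun σ p i) ∧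
    (∀ i ∈ Finset.Icc 1 σ, 1 ≤ 2 * (p i : ℤ) + psiFun σ p i) ∧
    (∑ i ∈ Finset.Icc 1 σ, (2 * (p i : ℤ) + psiFun σ p i)) = 2 * (n : ℤ) + ((σ % 2 : ℕ) : ℤ) := by
  obtain ⟨hσ, hpos, hmono, hsum⟩ := hp
  have hanti : AntitoneOn p (Set.Icc 1 σ) := fun i hi j hj hij => hmono i j hi.1 hij hj.2
  refine ⟨fun i hi hiσ => two_mul_add_psiFun_succ_le (hmono i (i + 1) hi (by omega) hiσ) hi hiσ,
    fun i hi => ?_, ?_⟩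
  · have := hpos i hi
    have := psiFun.neg_one_le σ p i
    omega
  · rw [Finset.sum_add_distrib, ← Finset.mul_sum, psiFun.sum_Icc hanti hσ, ← hsum]
    push_cast
    rfl
end

section
/- Let n ≥ 1 and let p_* = (p_1 ≥ p_2 ≥ … ≥ p_σ) and p'_* = (p'_1 ≥ p'_2 ≥ … ≥ p'_σ) be two elements of 𝒫_n with the same number σ of parts, with associated functions ψ and ψ' respectively. If 2p_i + ψ(i) = 2p'_i + ψ'(i) for every i ∈ [1,σ], then p_i = p'_i for every i ∈ [1,σ]. -/
/-!
`ψ(t)` is either `0` or the sign `-(-1)^t`, which depends on `t` alone. Hence the parity of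
`2p_t + ψ(t)` recovers `ψ(t)`, and then `p_t`.
-/

lemma psiFun_eq_zero_or_eq_neg_neg_one_pow (σ : ℕ) (p : ℕ → ℕ) (t : ℕ) :
    psiFun σ p t = 0 ∨ psiFun σ p t = -(-1) ^ t := by
  unfold psiFun
  split_ifs with h_odd h_even
  · simp [h_odd.1.neg_one_pow]
  · simp [h_even.1.neg_one_pow]
  · exact Or.inl rfl

lemma Int.eq_of_two_mul_add_eq_two_mul_add {a b u v s : ℤ} (hs : s = 1 ∨ s = -1)
    (hu : u = 0 ∨ u = s) (hv : v = 0 ∨ v = s) (h : 2 * a + u = 2 * b + v) : a = b := by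
  rcases hs with rfl | rfl <;> rcases hu with rfl | rfl <;> rcases hv with rfl | rfl <;> omega

theorem stmt_6_general (σ : ℕ) (p p' : ℕ → ℕ)
    (heq : ∀ i ∈ Finset.Icc 1 σ,
      2 * (p i : ℤ) + psiFun σ p i = 2 * (p' i : ℤ) + psiFun σ p' i) :
    ∀ i ∈ Finset.Icc 1 σ, p i = p' i := by
  intro i hi
  have h_sign : -(-1 : ℤ) ^ i = 1 ∨ -(-1 : ℤ) ^ i = -1 := by
    rcases neg_one_pow_eq_or ℤ i with h | h <;> simp [h]
  exact_mod_cast Int.eq_of_two_mul_add_eq_two_mul_add h_sign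
    (psiFun_eq_zero_or_eq_neg_neg_one_pow σ p i)
    (psiFun_eq_zero_or_eq_neg_neg_one_pow σ p' i) (heq i hi)

/-- if two partitions of `n` with the same number `σ` of parts satisfy
`2p_i + ψ(i) = 2p'_i + ψ'(i)` for every `i ∈ [1,σ]`, then `p_i = p'_i` for all `i ∈ [1,σ]`. -/
theorem stmt_6 (n σ : ℕ) (hn : 1 ≤ n) (p p' : ℕ → ℕ)
    (hp : IsPartitionOf n σ p) (hp' : IsPartitionOf n σ p')
    (heq : ∀ i ∈ Finset.Icc 1 σ,
      2 * (p i : ℤ) + psiFun σ p i = 2 * (p' i : ℤ) + psiFun σ p' i) :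
    ∀ i ∈ Finset.Icc 1 σ, p i = p' i :=
  stmt_6_general σ p p' heq
end

section
/- Let k be a field and V a k-vector space of dimension 2n with a nondegenerate alternating bilinear form (,). Let p_* = (p_1 ≥ … ≥ p_σ) ∈ 𝒫_n, let g be a unipotent isometry of V, N := g − 1, and let v_1, …, v_σ ∈ V satisfy: (g^i v_t, v_r) = 0 for all 1 ≤ t < r ≤ σ and i ∈ [−p_t, p_t − 1]; (v_r, g^i v_r) = 0 for i ∈ [−p_r + 1, p_r − 1]; (v_r, g^{p_r} v_r) = 1; and the vectors g^j v_t (t ∈ [1,σ], j ∈ [−p_t, p_t − 1]) form a basis of V. Let k_0 > 0 be an integer and d ∈ [1,σ] with 2p_d ≥ k_0 ≥ 2p_{d+1} (convention p_{σ+1} = 0), and assume dim N^{k_0}(V) = Σ_{r=1}^{d} (2p_r − k_0). Set W_d = span{g^j v_r : r ∈ [1,d], j ∈ [−p_r, p_r − 1]} and W'_d = span{g^j v_r : r ∈ [d+1,σ], j ∈ [−p_r, p_r − 1]}. Then: gW_d = W_d; gW'_d = W'_d; W'_d = W_d^⊥; N^{k_0} W'_d = 0; dim ker(N restricted to W_d)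 = d; and dim ker(N^{k_0} restricted to W_d) = k_0 · d (so each of the d Jordan blocks of g on W_d has size ≥ k_0). -/
/-!
Pair the vectors `N^s g^j v_r` (`r ≤ d`, `-p_r ≤ j ≤ p_r - 1 - s`) with the vectors
`g^(j + s - p_r) v_r`. Since `N^s g^j v_r ≡ g^(j+s) v_r` modulo the span of `g^i v_r`,
`j ≤ i < j + s`, the relations on the `v_r` make this pairing matrix triangular for the
lexicographic order on `(p_r - j, r)`, with diagonal entries `-1`; so these vectors are linearly
independent. For `s = k₀` there are `∑ (2p_r - k₀) = dim N^{k₀}(V)` of them, hence they span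
`N^{k₀}(V)`, which therefore lies in `W_d`; as `g^{p_r} v_r ≡ N^{k₀} g^{p_r - k₀} v_r` modulo
`W_d`, the space `W_d` is `g`-stable. Then `W'_d ⊆ W_d^⊥` by the orthogonality relations, with
equality by counting dimensions, so `W'_d` is `g`-stable too and
`N^{k₀} W'_d ⊆ W'_d ∩ N^{k₀}(V) ⊆ W'_d ∩ W_d = 0`. Rank–nullity on `W_d` gives
`dim ker N^{k₀}|W_d = k₀ d`, and for `s = 1` it gives `dim ker N|W_d ≤ d`; the reverse inequality
follows from `dim ker A^m ≤ m · dim ker A`.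
-/

section

variable {k V : Type*} [Field k] [AddCommGroup V] [Module k V]

/-- For a bilinear form `B` and a subspace `X`, the perpendicular subspace
`X^⊥ = {y ∈ V : B(y,x) = 0 for all x ∈ X}`. -/
def perpSub (B : V →ₗ[k] V →ₗ[k] k) (X : Submodule k V) : Submodule k V where
  carrier := {y | ∀ x ∈ X, B y x = 0}
  add_mem' := by
    intro a b ha hb
    simp only [Set.mem_setOf_eq] at *
    intro x hx
    rw [map_add, LinearMap.add_apply, ha x hx, hb x hx, add_zero]
  zero_mem' := by
    simp only [Set.mem_setOf_eq]
    intro x hx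
    rw [map_zero, LinearMap.zero_apply]
  smul_mem' := by
    intro c a ha
    simp only [Set.mem_setOf_eq] at *
    intro x hx
    rw [map_smul, LinearMap.smul_apply, ha x hx, smul_zero]

/-- `p_{≤r} = p_1 + … + p_r` (so `partialSum p (r-1) = p_{<r}`). -/
def partialSum (p : ℕ → ℕ) (r : ℕ) : ℕ := ∑ t ∈ Finset.Icc 1 r, p t

open Finset Module Submodule

lemma linearIndependent_of_triangular_pairing {R M ι α : Type*} [CommRing R] [NoZeroDivisors R]
    [AddCommGroup M] [Module R M] [LinearOrder α] (B : M →ₗ[R] M →ₗ[R] R) {x y : ι → M}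
    {key : ι → α} (hkey : Function.Injective key)
    (hzero : ∀ i j, key j < key i → B (x i) (y j) = 0) (hdiag : ∀ i, B (x i) (y i) ≠ 0) :
    LinearIndependent R x := by
  classical
  rw [linearIndependent_iff']
  intro s c hc
  by_contra! hne
  obtain ⟨i₀, hi₀, hmin⟩ := (s.filter (c · ≠ 0)).exists_min_image key
    (by simpa [Finset.Nonempty] using hne)
  rw [mem_filter] at hi₀
  have hpair : ∑ i ∈ s, c i * B (x i) (y i₀) = 0 := by
    simpa using congrArg (fun z => B z (y i₀)) hc
  rw [sum_eq_single_of_mem i₀ hi₀.1] at hpair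
  · exact mul_ne_zero hi₀.2 (hdiag i₀) hpair
  · intro i hi hii₀
    by_cases hci : c i = 0
    · rw [hci, zero_mul]
    · have hle := hmin i (mem_filter.2 ⟨hi, hci⟩)
      rw [hzero i i₀ (hle.lt_of_ne (hkey.ne hii₀).symm), mul_zero]

lemma finrank_map_add_finrank_ker_inf {K V V₂ : Type*} [DivisionRing K] [AddCommGroup V]
    [Module K V] [AddCommGroup V₂] [Module K V₂] (f : V →ₗ[K] V₂) (W : Submodule K V)
    [FiniteDimensional K W] :
    finrank K (W.map f) + finrank K ↥(LinearMap.ker f ⊓ W) = finrank K W := by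
  rw [← (f.domRestrict W).finrank_range_add_finrank_ker, LinearMap.range_domRestrict,
    LinearMap.ker_domRestrict, inf_comm, ← map_comap_subtype,
    (equivMapOfInjective _ W.injective_subtype _).finrank_eq]

lemma finrank_ker_pow_inf_le {K V : Type*} [DivisionRing K] [AddCommGroup V] [Module K V]
    (A : Module.End K V) {W : Submodule K V} [FiniteDimensional K W] (hW : ∀ w ∈ W, A w ∈ W)
    (m : ℕ) : finrank K ↥(LinearMap.ker (A ^ m) ⊓ W) ≤ m * finrank K ↥(LinearMap.ker A ⊓ W) := by
  induction m with
  | zero => simp [Module.End.one_eq_id]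
  | succ m ih =>
    set U := LinearMap.ker (A ^ (m + 1)) ⊓ W
    have hmap : U.map A ≤ LinearMap.ker (A ^ m) ⊓ W := by
      rintro _ ⟨u, ⟨hu, huW⟩, rfl⟩
      refine ⟨?_, hW u huW⟩
      simpa [LinearMap.mem_ker, pow_succ, Module.End.mul_apply] using hu
    have hker : LinearMap.ker A ⊓ U ≤ LinearMap.ker A ⊓ W := inf_le_inf_left _ inf_le_right
    have := finrank_map_add_finrank_ker_inf A U
    have := finrank_mono hmap
    have := finrank_mono hker
    rw [add_mul, one_mul]
    omega

section Orbit

variable {R M : Type*} [Ring R] [AddCommGroup M] [Module R M] (g : M ≃ₗ[R] M)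

lemma sub_one_apply_zpow (j : ℤ) (x : M) :
    (g.toLinearMap - LinearMap.id : Module.End R M) ((g ^ j) x) = (g ^ (j + 1)) x - (g ^ j) x := by
  rw [add_comm, zpow_one_add]
  rfl

lemma sub_one_pow_apply_zpow_sub_mem_span (s : ℕ) (j : ℤ) (x : M) :
    ((g.toLinearMap - LinearMap.id : Module.End R M) ^ s) ((g ^ j) x) - (g ^ (j + s)) x ∈
      span R ((fun i => (g ^ i) x) '' Set.Ico j (j + s)) := by
  induction s generalizing j with
  | zero => simp
  | succ s ih =>
    have hsub : ∀ a b, Set.Ico a b ⊆ Set.Ico j (j + ↑(s + 1)) →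
        span R ((fun i => (g ^ i) x) '' Set.Ico a b) ≤
          span R ((fun i => (g ^ i) x) '' Set.Ico j (j + ↑(s + 1))) :=
      fun a b h => span_mono (Set.image_mono h)
    have h₁ := hsub _ _ (Set.Ico_subset_Ico (by omega) (by push_cast; omega)) (ih (j + 1))
    have h₀ := hsub _ _ (Set.Ico_subset_Ico le_rfl (by push_cast; omega)) (ih j)
    have hlast : (g ^ (j + s)) x ∈ span R ((fun i => (g ^ i) x) '' Set.Ico j (j + ↑(s + 1))) :=
      subset_span ⟨j + s, by push_cast; constructor <;> omega, rfl⟩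
    convert sub_mem (sub_mem h₁ h₀) hlast using 1
    rw [pow_succ, Module.End.mul_apply, sub_one_apply_zpow, map_sub]
    push_cast
    rw [show j + 1 + s = j + (s + 1) by ring]
    abel

lemma sub_one_pow_apply_zpow_mem_iff {W : Submodule R M} {s : ℕ} {j : ℤ} {x : M}
    (hW : ∀ i ∈ Set.Ico j (j + s), (g ^ i) x ∈ W) :
    ((g.toLinearMap - LinearMap.id : Module.End R M) ^ s) ((g ^ j) x) ∈ W ↔
      (g ^ (j + s)) x ∈ W := by
  have hdiff := span_le.2 (by rintro _ ⟨i, hi, rfl⟩; exact hW i hi)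
    (sub_one_pow_apply_zpow_sub_mem_span g s j x)
  exact ⟨fun h => by simpa using sub_mem h hdiff, fun h => by simpa using add_mem hdiff h⟩

lemma zpow_apply_mem_of_map_eq {W : Submodule R M} (hW : W.map g.toLinearMap = W) (a : ℤ)
    {x : M} (hx : x ∈ W) : (g ^ a) x ∈ W := by
  induction a using Int.induction_on generalizing x with
  | zero => exact hx
  | succ n ih =>
    rw [zpow_add_one, LinearEquiv.mul_apply]
    exact ih (hW ▸ mem_map_of_mem hx)
  | pred n ih =>
    rw [zpow_sub_one, LinearEquiv.mul_apply]
    refine ih ?_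
    rw [← hW] at hx
    obtain ⟨z, hz, rfl⟩ := hx
    simpa using hz

lemma sub_one_pow_apply_mem_of_map_eq {W : Submodule R M} (hW : W.map g.toLinearMap = W) (s : ℕ)
    {x : M} (hx : x ∈ W) : ((g.toLinearMap - LinearMap.id : Module.End R M) ^ s) x ∈ W := by
  have hN : Set.MapsTo (g.toLinearMap - LinearMap.id : Module.End R M) W W := fun y hy =>
    sub_mem (hW ▸ mem_map_of_mem hy) hy
  rw [Module.End.pow_apply]
  exact hN.iterate s hx

lemma map_sub_one_pow_eq_bot {W W' : Submodule R M} (hW' : W'.map g.toLinearMap = W') {s : ℕ}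
    (hrange : LinearMap.range ((g.toLinearMap - LinearMap.id : Module.End R M) ^ s) ≤ W)
    (hdisj : Disjoint W W') :
    W'.map ((g.toLinearMap - LinearMap.id : Module.End R M) ^ s) = ⊥ := by
  rw [eq_bot_iff]
  rintro _ ⟨w, hw, rfl⟩
  exact hdisj.le_bot ⟨hrange (LinearMap.mem_range_self _ w),
    sub_one_pow_apply_mem_of_map_eq g hW' s hw⟩

end Orbit

section Isometry

variable {R M : Type*} [CommRing R] [AddCommGroup M] [Module R M] (B : M →ₗ[R] M →ₗ[R] R)
  {g : M ≃ₗ[R] M}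

lemma zpow_isometry (hg : ∀ x y, B (g x) (g y) = B x y) (a : ℤ) (x y : M) :
    B ((g ^ a) x) ((g ^ a) y) = B x y := by
  induction a using Int.induction_on generalizing x y with
  | zero => rfl
  | succ n ih => rw [zpow_add_one, LinearEquiv.mul_apply, LinearEquiv.mul_apply, ih, hg]
  | pred n ih =>
    rw [zpow_sub_one, LinearEquiv.mul_apply, LinearEquiv.mul_apply, ih, ← hg,
      ← LinearEquiv.mul_apply, ← LinearEquiv.mul_apply, mul_inv_cancel]
    rfl

lemma apply_zpow_zpow (hg : ∀ x y, B (g x) (g y) = B x y) (a b : ℤ) (x y : M) :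
    B ((g ^ a) x) ((g ^ b) y) = B ((g ^ (a - b)) x) y := by
  rw [← zpow_isometry B hg b ((g ^ (a - b)) x), ← LinearEquiv.mul_apply, ← zpow_add,
    add_sub_cancel]

lemma apply_zpow_right (hg : ∀ x y, B (g x) (g y) = B x y) (b : ℤ) (x y : M) :
    B x ((g ^ b) y) = B ((g ^ (-b)) x) y := by
  simpa using apply_zpow_zpow B hg 0 b x y

lemma apply_sub_one_pow_zpow_eq {s : ℕ} {j : ℤ} {x y : M}
    (h : ∀ i ∈ Set.Ico j (j + s), B ((g ^ i) x) y = 0) :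
    B (((g.toLinearMap - LinearMap.id : Module.End R M) ^ s) ((g ^ j) x)) y =
      B ((g ^ (j + s)) x) y := by
  have hle : span R ((fun i => (g ^ i) x) '' Set.Ico j (j + s)) ≤ LinearMap.ker (B.flip y) :=
    span_le.2 (by rintro _ ⟨i, hi, rfl⟩; exact h i hi)
  have := hle (sub_one_pow_apply_zpow_sub_mem_span g s j x)
  rwa [LinearMap.mem_ker, map_sub, LinearMap.flip_apply, LinearMap.flip_apply, sub_eq_zero] at this

end Isometry

lemma map_perpSub (B : V →ₗ[k] V →ₗ[k] k) {g : V ≃ₗ[k] V} (hg : ∀ x y, B (g x) (g y) = B x y)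
    (W : Submodule k V) : (perpSub B W).map g.toLinearMap = perpSub B (W.map g.toLinearMap) := by
  ext y
  constructor
  · rintro ⟨z, hz, rfl⟩ _ ⟨x, hx, rfl⟩
    simpa [hg] using hz x hx
  · intro hy
    refine ⟨g.symm y, fun x hx => ?_, g.apply_symm_apply y⟩
    rw [← hg, LinearEquiv.apply_symm_apply]
    exact hy _ (mem_map_of_mem hx)

lemma finrank_perpSub_add_finrank [FiniteDimensional k V] {B : V →ₗ[k] V →ₗ[k] k}
    (hB : B.IsRefl) (hnd : B.SeparatingLeft) (W : Submodule k V) :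
    finrank k (perpSub B W) + finrank k W = finrank k V := by
  have hperp : perpSub B W = LinearMap.BilinForm.orthogonal B W := by
    ext y
    exact ⟨fun hy x hx => hB y x (hy x hx), fun hy x hx => hB x y (hy x hx)⟩
  rw [hperp, LinearMap.BilinForm.finrank_orthogonal (hB.nondegenerate_iff_separatingLeft.2 hnd),
    Nat.sub_add_cancel W.finrank_le]

-- The `(r, j)`, `a ≤ r ≤ b`, for which `g^j v_r, …, g^(j+s) v_r` all lie in the `r`-th block
-- `span {g^i v_r | -p_r ≤ i < p_r}`.
noncomputable def blockIndex (p : ℕ → ℕ) (a b s : ℕ) : Finset (ℕ × ℤ) :=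
  ((Icc a b).sigma fun r => Icc (-(p r : ℤ)) (p r - 1 - s)).map
    (Equiv.sigmaEquivProd ℕ ℤ).toEmbedding

lemma mem_blockIndex {p : ℕ → ℕ} {a b s r : ℕ} {j : ℤ} :
    (r, j) ∈ blockIndex p a b s ↔ a ≤ r ∧ r ≤ b ∧ -(p r : ℤ) ≤ j ∧ j ≤ p r - 1 - s := by
  simp [blockIndex, and_assoc]

lemma card_blockIndex (p : ℕ → ℕ) (a b s : ℕ) :
    #(blockIndex p a b s) = ∑ r ∈ Icc a b, (2 * p r - s) := by
  rw [blockIndex, card_map, card_sigma]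
  refine sum_congr rfl fun r _ => ?_
  rw [Int.card_Icc]
  omega

lemma blockIndex_mono {p : ℕ → ℕ} {a b a' b' s s' : ℕ} (ha : a' ≤ a) (hb : b ≤ b')
    (hs : s' ≤ s) : blockIndex p a b s ⊆ blockIndex p a' b' s' := by
  rintro ⟨r, j⟩ hq
  rw [mem_blockIndex] at hq ⊢
  omega

lemma disjoint_blockIndex (p : ℕ → ℕ) (a b c s : ℕ) :
    Disjoint (blockIndex p a b s) (blockIndex p (b + 1) c s) := by
  rw [disjoint_left]
  rintro ⟨r, j⟩ hq hq'
  rw [mem_blockIndex] at hq hq'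
  omega

lemma blockIndex_union {p : ℕ → ℕ} {a b c s : ℕ} (hab : a ≤ b + 1) (hbc : b ≤ c) :
    blockIndex p a b s ∪ blockIndex p (b + 1) c s = blockIndex p a c s := by
  ext ⟨r, j⟩
  simp only [mem_union, mem_blockIndex]
  omega

lemma sum_two_mul_sub {p : ℕ → ℕ} {d s : ℕ} (hs : ∀ r, 1 ≤ r → r ≤ d → s ≤ 2 * p r) :
    ∑ r ∈ Icc 1 d, (2 * p r - s) + s * d = ∑ r ∈ Icc 1 d, 2 * p r := by
  rw [show s * d = ∑ r ∈ Icc 1 d, s by simp [mul_comm], ← sum_add_distrib]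
  exact sum_congr rfl fun r hr => Nat.sub_add_cancel (hs r (mem_Icc.1 hr).1 (mem_Icc.1 hr).2)

lemma finrank_span_image_blockIndex {f : ℕ × ℤ → V} {p : ℕ → ℕ} {a b s : ℕ}
    (hf : LinearIndepOn k f (blockIndex p a b s)) :
    finrank k (span k (f '' blockIndex p a b s)) = #(blockIndex p a b s) := by
  rw [Set.image_eq_range, finrank_span_eq_card hf]
  exact Fintype.card_coe _

lemma disjoint_span_image_blockIndex {f : ℕ × ℤ → V} {p : ℕ → ℕ} {a b c s : ℕ}
    (hf : LinearIndepOn k f (blockIndex p a c s)) (hab : a ≤ b + 1) (hbc : b ≤ c) :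
    Disjoint (span k (f '' blockIndex p a b s)) (span k (f '' blockIndex p (b + 1) c s)) := by
  rw [← blockIndex_union hab hbc, coe_union] at hf
  exact ((linearIndepOn_union_iff (disjoint_coe.2 (disjoint_blockIndex p a b c s))).1 hf).2.2

def orbitVec (g : V ≃ₗ[k] V) (v : ℕ → V) (q : ℕ × ℤ) : V := (g ^ q.2) (v q.1)

section OrbitSpan

variable (g : V ≃ₗ[k] V) (v : ℕ → V) (p : ℕ → ℕ)

lemma setOf_eq_image_blockIndex (a b : ℕ) :
    {y | ∃ r, a ≤ r ∧ r ≤ b ∧ ∃ j : ℤ, -(p r : ℤ) ≤ j ∧ j ≤ (p r : ℤ) - 1 ∧ y = (g ^ j) (v r)} =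
      orbitVec g v '' blockIndex p a b 0 := by
  ext y
  simp only [Set.mem_image, mem_coe, mem_blockIndex, Prod.exists, orbitVec]
  aesop

lemma linearIndepOn_orbitVec_of_linearIndependent {σ : ℕ}
    (h : LinearIndependent k
      (fun q : {q : ℕ × ℤ // 1 ≤ q.1 ∧ q.1 ≤ σ ∧ -(p q.1 : ℤ) ≤ q.2 ∧ q.2 ≤ (p q.1 : ℤ) - 1} =>
        (g ^ q.1.2) (v q.1.1))) :
    LinearIndepOn k (orbitVec g v) (blockIndex p 1 σ 0) := by
  have h' : LinearIndepOn k (orbitVec g v)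
      {q | 1 ≤ q.1 ∧ q.1 ≤ σ ∧ -(p q.1 : ℤ) ≤ q.2 ∧ q.2 ≤ (p q.1 : ℤ) - 1} := h
  refine h'.mono fun ⟨r, j⟩ hq => ?_
  rw [mem_coe, mem_blockIndex] at hq
  exact ⟨hq.1, hq.2.1, hq.2.2.1, (by omega : j ≤ (p r : ℤ) - 1)⟩

lemma orbitVec_mem_span {a b : ℕ} {r : ℕ} {j : ℤ} (hr₁ : a ≤ r) (hr₂ : r ≤ b)
    (hj₁ : -(p r : ℤ) ≤ j) (hj₂ : j ≤ p r - 1) :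
    (g ^ j) (v r) ∈ span k (orbitVec g v '' blockIndex p a b 0) :=
  subset_span ⟨(r, j), by rw [mem_coe, mem_blockIndex]; omega, rfl⟩

lemma span_sub_one_pow_orbitVec_le (a b s : ℕ) :
    span k ((fun q => ((g.toLinearMap - LinearMap.id : Module.End k V) ^ s) (orbitVec g v q)) ''
      blockIndex p a b s) ≤ span k (orbitVec g v '' blockIndex p a b 0) := by
  rw [span_le]
  rintro _ ⟨⟨r, j⟩, hq, rfl⟩
  rw [mem_coe, mem_blockIndex] at hq
  dsimp only [orbitVec]
  refine (sub_one_pow_apply_zpow_mem_iff g fun i hi => ?_).2 ?_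
  · exact orbitVec_mem_span g v p hq.1 hq.2.1 (by simp at hi; omega) (by simp at hi; omega)
  · exact orbitVec_mem_span g v p hq.1 hq.2.1 (by omega) (by omega)

lemma span_sub_one_pow_orbitVec_le_map (a b s : ℕ) :
    span k ((fun q => ((g.toLinearMap - LinearMap.id : Module.End k V) ^ s) (orbitVec g v q)) ''
      blockIndex p a b s) ≤
      (span k (orbitVec g v '' blockIndex p a b 0)).map
        ((g.toLinearMap - LinearMap.id : Module.End k V) ^ s) := by
  rw [map_span, ← Set.image_comp]
  exact span_mono (Set.image_mono (blockIndex_mono le_rfl le_rfl (Nat.zero_le s)))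

lemma map_span_orbitVec_eq [FiniteDimensional k V] {a b : ℕ}
    (htop : ∀ r, a ≤ r → r ≤ b →
      (g ^ (p r : ℤ)) (v r) ∈ span k (orbitVec g v '' blockIndex p a b 0)) :
    (span k (orbitVec g v '' blockIndex p a b 0)).map g.toLinearMap =
      span k (orbitVec g v '' blockIndex p a b 0) := by
  refine eq_of_le_of_finrank_le ?_ (g.finrank_map_eq _).ge
  rw [map_span, span_le]
  rintro _ ⟨_, ⟨⟨r, j⟩, hq, rfl⟩, rfl⟩
  rw [mem_coe, mem_blockIndex] at hq
  dsimp only [LinearEquiv.coe_coe, orbitVec]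
  rw [← LinearEquiv.mul_apply, ← zpow_one_add, add_comm]
  rcases lt_or_eq_of_le (show j + 1 ≤ p r by omega) with hj | hj
  · exact orbitVec_mem_span g v p hq.1 hq.2.1 (by omega) (by omega)
  · exact hj ▸ htop r hq.1 hq.2.1

lemma map_span_orbitVec_eq_of_range_le [FiniteDimensional k V] {d s : ℕ}
    (hs : ∀ r, 1 ≤ r → r ≤ d → s ≤ 2 * p r)
    (hrange : LinearMap.range ((g.toLinearMap - LinearMap.id : Module.End k V) ^ s) ≤
      span k (orbitVec g v '' blockIndex p 1 d 0)) :
    (span k (orbitVec g v '' blockIndex p 1 d 0)).map g.toLinearMap =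
      span k (orbitVec g v '' blockIndex p 1 d 0) := by
  refine map_span_orbitVec_eq g v p fun r hr₁ hr₂ => ?_
  have := hs r hr₁ hr₂
  have hmem := (sub_one_pow_apply_zpow_mem_iff g (j := p r - s) fun i hi =>
    orbitVec_mem_span g v p hr₁ hr₂ (by simp at hi; omega) (by simp at hi; omega)).1
    (hrange (LinearMap.mem_range_self _ _))
  rwa [sub_add_cancel] at hmem

lemma finrank_span_orbitVec {d : ℕ}
    (hli : LinearIndepOn k (orbitVec g v) (blockIndex p 1 d 0)) :
    finrank k (span k (orbitVec g v '' blockIndex p 1 d 0)) = ∑ r ∈ Icc 1 d, 2 * p r := by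
  rw [finrank_span_image_blockIndex hli, card_blockIndex]
  rfl

lemma finrank_span_orbitVec_add_finrank {σ d : ℕ}
    (hli : LinearIndepOn k (orbitVec g v) (blockIndex p 1 σ 0)) (hdσ : d ≤ σ) :
    finrank k (span k (orbitVec g v '' blockIndex p 1 d 0)) +
      finrank k (span k (orbitVec g v '' blockIndex p (d + 1) σ 0)) =
      ∑ r ∈ Icc 1 σ, 2 * p r := by
  rw [finrank_span_image_blockIndex (hli.mono (blockIndex_mono le_rfl hdσ le_rfl)),
    finrank_span_image_blockIndex (hli.mono (blockIndex_mono (by omega) le_rfl le_rfl)),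
    ← card_union_of_disjoint (disjoint_blockIndex p 1 d σ 0), blockIndex_union (by omega) hdσ,
    card_blockIndex]
  rfl

lemma finrank_ker_inf_span_orbitVec [FiniteDimensional k V] {V₂ : Type*} [AddCommGroup V₂]
    [Module k V₂] {d s : ℕ} (hli : LinearIndepOn k (orbitVec g v) (blockIndex p 1 d 0))
    (f : V →ₗ[k] V₂) (hs : ∀ r, 1 ≤ r → r ≤ d → s ≤ 2 * p r)
    (hf : finrank k ((span k (orbitVec g v '' blockIndex p 1 d 0)).map f) =
      ∑ r ∈ Icc 1 d, (2 * p r - s)) :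
    finrank k ↥(LinearMap.ker f ⊓ span k (orbitVec g v '' blockIndex p 1 d 0)) = s * d := by
  have := finrank_map_add_finrank_ker_inf f (span k (orbitVec g v '' blockIndex p 1 d 0))
  rw [hf, finrank_span_orbitVec g v p hli, ← sum_two_mul_sub hs] at this
  omega

end OrbitSpan

structure IsJordanFamily (B : V →ₗ[k] V →ₗ[k] k) (g : V ≃ₗ[k] V) (σ : ℕ) (p : ℕ → ℕ)
    (v : ℕ → V) : Prop where
  orth : ∀ r ∈ Icc 1 σ, ∀ t, 1 ≤ t → t < r →
    ∀ i : ℤ, -(p t : ℤ) ≤ i → i ≤ (p t : ℤ) - 1 → B ((g ^ i) (v t)) (v r) = 0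
  self_orth : ∀ r ∈ Icc 1 σ,
    ∀ i : ℤ, -(p r : ℤ) + 1 ≤ i → i ≤ (p r : ℤ) - 1 → B (v r) ((g ^ i) (v r)) = 0
  normalized : ∀ r ∈ Icc 1 σ, B (v r) ((g ^ (p r : ℤ)) (v r)) = 1

namespace IsJordanFamily

variable {B : V →ₗ[k] V →ₗ[k] k} {g : V ≃ₗ[k] V} {σ : ℕ} {p : ℕ → ℕ} {v : ℕ → V} {r t : ℕ}
  {m : ℤ}

lemma gram_of_lt (hv : IsJordanFamily B g σ p v) (hr : 1 ≤ r) (hrt : r < t) (ht : t ≤ σ)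
    (hm₁ : -(p r : ℤ) ≤ m) (hm₂ : m ≤ p r - 1) :
    B ((g ^ m) (v r)) (v t) = 0 :=
  hv.orth t (mem_Icc.2 ⟨by omega, ht⟩) r hr hrt m hm₁ hm₂

lemma gram_of_gt (hv : IsJordanFamily B g σ p v) (hg : ∀ x y, B (g x) (g y) = B x y)
    (halt : B.IsAlt) (ht : 1 ≤ t) (htr : t < r) (hr : r ≤ σ)
    (hm₁ : -(p t : ℤ) + 1 ≤ m) (hm₂ : m ≤ p t) :
    B ((g ^ m) (v r)) (v t) = 0 := by
  rw [← halt.neg, neg_eq_zero, apply_zpow_right B hg,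
    hv.orth r (mem_Icc.2 ⟨by omega, hr⟩) t ht htr _ (by omega) (by omega)]

lemma gram_self (hv : IsJordanFamily B g σ p v) (halt : B.IsAlt) (hr : r ∈ Icc 1 σ)
    (hm₁ : -(p r : ℤ) + 1 ≤ m) (hm₂ : m ≤ p r - 1) :
    B ((g ^ m) (v r)) (v r) = 0 := by
  rw [← halt.neg, hv.self_orth r hr m hm₁ hm₂, neg_zero]

lemma gram_self_top (hv : IsJordanFamily B g σ p v) (halt : B.IsAlt) (hr : r ∈ Icc 1 σ) :
    B ((g ^ (p r : ℤ)) (v r)) (v r) = -1 := by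
  rw [← halt.neg, hv.normalized r hr]

theorem linearIndepOn_sub_one_pow (hv : IsJordanFamily B g σ p v)
    (hg : ∀ x y, B (g x) (g y) = B x y) (halt : B.IsAlt)
    (hmono : ∀ i j, 1 ≤ i → i ≤ j → j ≤ σ → p j ≤ p i) {d : ℕ} (hdσ : d ≤ σ) (s : ℕ) :
    LinearIndepOn k (fun q => ((g.toLinearMap - LinearMap.id : Module.End k V) ^ s)
      (orbitVec g v q)) (blockIndex p 1 d s) := by
  refine linearIndependent_of_triangular_pairing B
    (y := fun q : blockIndex p 1 d s => orbitVec g v (q.1.1, q.1.2 + s - p q.1.1))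
    (key := fun q => toLex ((p q.1.1 : ℤ) - q.1.2, q.1.1)) ?_ ?_ ?_
  · rintro ⟨⟨r, j⟩, _⟩ ⟨⟨r', j'⟩, _⟩ h
    simp only [toLex_inj, Prod.mk.injEq] at h
    obtain ⟨h₁, rfl⟩ := h
    simp only [Subtype.mk.injEq, Prod.mk.injEq, true_and]
    omega
  · rintro ⟨⟨r, j⟩, hq⟩ ⟨⟨r₀, j₀⟩, hq₀⟩ hlt
    simp only [mem_coe, mem_blockIndex] at hq hq₀
    rw [Prod.Lex.toLex_lt_toLex] at hlt
    simp only at hlt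
    have hzero : ∀ i, j ≤ i → i ≤ j + s →
        B ((g ^ i) (v r)) ((g ^ (j₀ + s - p r₀)) (v r₀)) = 0 := by
      intro i hi₁ hi₂
      rw [apply_zpow_zpow B hg]
      rcases lt_trichotomy r r₀ with h | rfl | h
      · exact hv.gram_of_lt hq.1 h (by omega) (by omega) (by omega)
      · exact hv.gram_self halt (mem_Icc.2 ⟨hq.1, by omega⟩) (by omega) (by omega)
      · have := hmono r₀ r hq₀.1 h.le (by omega)
        exact hv.gram_of_gt hg halt hq₀.1 h (by omega) (by omega) (by omega)
    simp only [orbitVec]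
    rw [apply_sub_one_pow_zpow_eq B fun i hi => hzero i hi.1 hi.2.le, hzero _ (by omega) le_rfl]
  · rintro ⟨⟨r, j⟩, hq⟩
    simp only [mem_coe, mem_blockIndex] at hq
    have hr : r ∈ Icc 1 σ := mem_Icc.2 ⟨hq.1, by omega⟩
    simp only [orbitVec]
    rw [apply_sub_one_pow_zpow_eq B fun i hi => ?_, apply_zpow_zpow B hg,
      show j + s - (j + s - p r) = p r by ring, hv.gram_self_top halt hr]
    · exact neg_ne_zero.2 one_ne_zero
    · rw [apply_zpow_zpow B hg]
      exact hv.gram_self halt hr (by simp at hi; omega) (by simp at hi; omega)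

lemma finrank_span_sub_one_pow (hv : IsJordanFamily B g σ p v)
    (hg : ∀ x y, B (g x) (g y) = B x y) (halt : B.IsAlt)
    (hmono : ∀ i j, 1 ≤ i → i ≤ j → j ≤ σ → p j ≤ p i) {d : ℕ} (hdσ : d ≤ σ) (s : ℕ) :
    finrank k (span k ((fun q => ((g.toLinearMap - LinearMap.id : Module.End k V) ^ s)
      (orbitVec g v q)) '' blockIndex p 1 d s)) = ∑ r ∈ Icc 1 d, (2 * p r - s) := by
  rw [finrank_span_image_blockIndex (hv.linearIndepOn_sub_one_pow hg halt hmono hdσ s),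
    card_blockIndex]

lemma range_sub_one_pow_eq [FiniteDimensional k V] (hv : IsJordanFamily B g σ p v)
    (hg : ∀ x y, B (g x) (g y) = B x y) (halt : B.IsAlt)
    (hmono : ∀ i j, 1 ≤ i → i ≤ j → j ≤ σ → p j ≤ p i) {d s : ℕ} (hdσ : d ≤ σ)
    (hrank : finrank k (LinearMap.range ((g.toLinearMap - LinearMap.id : Module.End k V) ^ s)) =
      ∑ r ∈ Icc 1 d, (2 * p r - s)) :
    LinearMap.range ((g.toLinearMap - LinearMap.id : Module.End k V) ^ s) =
      span k ((fun q => ((g.toLinearMap - LinearMap.id : Module.End k V) ^ s)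
        (orbitVec g v q)) '' blockIndex p 1 d s) := by
  refine (eq_of_le_of_finrank_le ?_ ?_).symm
  · exact span_le.2 <| by rintro _ ⟨q, -, rfl⟩; exact LinearMap.mem_range_self _ _
  · rw [hrank, hv.finrank_span_sub_one_pow hg halt hmono hdσ]

lemma span_eq_perpSub [FiniteDimensional k V] (hv : IsJordanFamily B g σ p v)
    (hg : ∀ x y, B (g x) (g y) = B x y) (halt : B.IsAlt) (hnd : B.SeparatingLeft) {d : ℕ}
    (hW : (span k (orbitVec g v '' blockIndex p 1 d 0)).map g.toLinearMap =
      span k (orbitVec g v '' blockIndex p 1 d 0))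
    (hdim : finrank k (span k (orbitVec g v '' blockIndex p 1 d 0)) +
      finrank k (span k (orbitVec g v '' blockIndex p (d + 1) σ 0)) = finrank k V) :
    span k (orbitVec g v '' blockIndex p (d + 1) σ 0) =
      perpSub B (span k (orbitVec g v '' blockIndex p 1 d 0)) := by
  refine eq_of_le_of_finrank_le ?_ ?_
  · rw [span_le]
    rintro _ ⟨⟨r, j⟩, hq, rfl⟩ x hx
    rw [mem_coe, mem_blockIndex] at hq
    have hperp : span k (orbitVec g v '' blockIndex p 1 d 0) ≤ LinearMap.ker (B.flip (v r)) :=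
      span_le.2 <| by
        rintro _ ⟨⟨t, i⟩, ht, rfl⟩
        rw [mem_coe, mem_blockIndex] at ht
        exact hv.orth r (mem_Icc.2 ⟨by omega, hq.2.1⟩) t ht.1 (by omega) i ht.2.2.1 (by omega)
    dsimp only [orbitVec]
    rw [← halt.neg, neg_eq_zero, apply_zpow_right B hg]
    exact hperp (zpow_apply_mem_of_map_eq g hW _ hx)
  · have := finrank_perpSub_add_finrank halt.isRefl hnd
      (span k (orbitVec g v '' blockIndex p 1 d 0))
    omega

lemma finrank_ker_sub_one_inf [FiniteDimensional k V] (hv : IsJordanFamily B g σ p v)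
    (hg : ∀ x y, B (g x) (g y) = B x y) (halt : B.IsAlt)
    (hmono : ∀ i j, 1 ≤ i → i ≤ j → j ≤ σ → p j ≤ p i) (hp : ∀ r ∈ Icc 1 σ, 1 ≤ p r)
    {d s : ℕ} (hdσ : d ≤ σ) (hs : 0 < s)
    (hli : LinearIndepOn k (orbitVec g v) (blockIndex p 1 d 0))
    (hW : (span k (orbitVec g v '' blockIndex p 1 d 0)).map g.toLinearMap =
      span k (orbitVec g v '' blockIndex p 1 d 0))
    (hker : finrank k ↥(LinearMap.ker ((g.toLinearMap - LinearMap.id : Module.End k V) ^ s) ⊓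
      span k (orbitVec g v '' blockIndex p 1 d 0)) = s * d) :
    finrank k ↥(LinearMap.ker (g.toLinearMap - LinearMap.id : Module.End k V) ⊓
      span k (orbitVec g v '' blockIndex p 1 d 0)) = d := by
  set N := (g.toLinearMap - LinearMap.id : Module.End k V)
  set W := span k (orbitVec g v '' blockIndex p 1 d 0)
  have hrange : ∑ r ∈ Icc 1 d, (2 * p r - 1) ≤ finrank k (W.map N) := by
    rw [← hv.finrank_span_sub_one_pow hg halt hmono hdσ 1, ← pow_one N]
    exact finrank_mono (span_sub_one_pow_orbitVec_le_map g v p 1 d 1)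
  have hsum := sum_two_mul_sub (p := p) (d := d) (s := 1) fun r hr₁ hr₂ => by
    have := hp r (mem_Icc.2 ⟨hr₁, hr₂.trans hdσ⟩); omega
  have hrn := finrank_map_add_finrank_ker_inf N W
  have hpow := finrank_ker_pow_inf_le N
    (fun w hw => by simpa only [pow_one] using sub_one_pow_apply_mem_of_map_eq g hW 1 hw) s
  rw [finrank_span_orbitVec g v p hli] at hrn
  rw [hker] at hpow
  have := Nat.le_of_mul_le_mul_left hpow hs
  omega

end IsJordanFamily

theorem stmt_11_general [FiniteDimensional k V] (n σ : ℕ) (p : ℕ → ℕ)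
    (hp : IsPartitionOf n σ p)
    (B : V →ₗ[k] V →ₗ[k] k)
    (halt : ∀ x : V, B x x = 0)
    (hnd : ∀ x : V, (∀ y : V, B x y = 0) → x = 0)
    (hdim : Module.finrank k V = 2 * n)
    (g : V ≃ₗ[k] V)
    (hg : ∀ x y : V, B (g x) (g y) = B x y)
    (v : ℕ → V)
    (hv1 : ∀ r ∈ Finset.Icc 1 σ, ∀ t, 1 ≤ t → t < r →
      ∀ i : ℤ, -(p t : ℤ) ≤ i → i ≤ (p t : ℤ) - 1 → B ((g ^ i) (v t)) (v r) = 0)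
    (hv2 : ∀ r ∈ Finset.Icc 1 σ,
      ∀ i : ℤ, -(p r : ℤ) + 1 ≤ i → i ≤ (p r : ℤ) - 1 → B (v r) ((g ^ i) (v r)) = 0)
    (hv3 : ∀ r ∈ Finset.Icc 1 σ, B (v r) ((g ^ (p r : ℤ)) (v r)) = 1)
    (hv_li : LinearIndependent k
      (fun q : {q : ℕ × ℤ // 1 ≤ q.1 ∧ q.1 ≤ σ ∧ -(p q.1 : ℤ) ≤ q.2 ∧ q.2 ≤ (p q.1 : ℤ) - 1} =>
        (g ^ q.1.2) (v q.1.1)))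
    (k0 : ℕ) (hk0 : 0 < k0) (d : ℕ) (hd : d ∈ Finset.Icc 1 σ)
    (hk0le : k0 ≤ 2 * p d)
    (hrank : Module.finrank k
        (LinearMap.range ((g.toLinearMap - LinearMap.id : Module.End k V) ^ k0))
      = ∑ r ∈ Finset.Icc 1 d, (2 * p r - k0)) :
    let Wd : Submodule k V := Submodule.span k
      {y | ∃ r, 1 ≤ r ∧ r ≤ d ∧ ∃ j : ℤ, -(p r : ℤ) ≤ j ∧ j ≤ (p r : ℤ) - 1 ∧ y = (g ^ j) (v r)}
    let Wd' : Submodule k V := Submodule.span k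
      {y | ∃ r, d + 1 ≤ r ∧ r ≤ σ ∧
        ∃ j : ℤ, -(p r : ℤ) ≤ j ∧ j ≤ (p r : ℤ) - 1 ∧ y = (g ^ j) (v r)}
    let N : Module.End k V := g.toLinearMap - LinearMap.id
    Submodule.map g.toLinearMap Wd = Wd ∧
    Submodule.map g.toLinearMap Wd' = Wd' ∧
    Wd' = perpSub B Wd ∧
    Submodule.map (N ^ k0) Wd' = ⊥ ∧
    Module.finrank k ↥(LinearMap.ker N ⊓ Wd) = d ∧
    Module.finrank k ↥(LinearMap.ker (N ^ k0) ⊓ Wd) = k0 * d := by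
  rw [setOf_eq_image_blockIndex, setOf_eq_image_blockIndex]
  intro Wd Wd' N
  obtain ⟨-, hp1, hmono, hpsum⟩ := hp
  obtain ⟨-, hdσ⟩ := mem_Icc.1 hd
  have hv : IsJordanFamily B g σ p v := ⟨hv1, hv2, hv3⟩
  have hli := linearIndepOn_orbitVec_of_linearIndependent g v p hv_li
  have hliW := hli.mono (blockIndex_mono le_rfl hdσ le_rfl)
  have hk0r : ∀ r, 1 ≤ r → r ≤ d → k0 ≤ 2 * p r := fun r hr₁ hr₂ => by
    have := hmono r d hr₁ hr₂ hdσ; omega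
  have hR := hv.range_sub_one_pow_eq hg halt hmono hdσ hrank
  have hRW : LinearMap.range (N ^ k0) ≤ Wd := hR ▸ span_sub_one_pow_orbitVec_le g v p 1 d k0
  have hgW : Wd.map g.toLinearMap = Wd := map_span_orbitVec_eq_of_range_le g v p hk0r hRW
  have hperp : Wd' = perpSub B Wd := hv.span_eq_perpSub hg halt hnd hgW <| by
    rw [finrank_span_orbitVec_add_finrank g v p hli hdσ, hdim, ← mul_sum, hpsum]
  have hgW' : Wd'.map g.toLinearMap = Wd' := by rw [hperp, map_perpSub B hg, hgW]
  have hmap : Wd.map (N ^ k0) = LinearMap.range (N ^ k0) :=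
    le_antisymm LinearMap.map_le_range (hR ▸ span_sub_one_pow_orbitVec_le_map g v p 1 d k0)
  have hker : finrank k ↥(LinearMap.ker (N ^ k0) ⊓ Wd) = k0 * d :=
    finrank_ker_inf_span_orbitVec g v p hliW (N ^ k0) hk0r (by rw [hmap, hrank])
  refine ⟨hgW, hgW', hperp, map_sub_one_pow_eq_bot g hgW' hRW ?_, ?_, hker⟩
  · exact disjoint_span_image_blockIndex hli (by omega) hdσ
  · exact hv.finrank_ker_sub_one_inf hg halt hmono hp1 hdσ hk0 hliW hgW hker

/-- 3.5(b): let `(V,B)` be a `2n`-dimensional symplectic space, `p_* ∈ 𝒫_n`,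
`g` a unipotent isometry, `N = g − 1`, and `v_1, …, v_σ` vectors satisfying the orthogonality,
normalization and basis conditions of 3.3. If `k_0 > 0`, `d ∈ [1,σ]` with
`2p_d ≥ k_0 ≥ 2p_{d+1}` (convention `p_{σ+1} = 0`) and `dim N^{k_0}(V) = Σ_{r=1}^d (2p_r − k_0)`,
then, with `W_d` (resp. `W'_d`) the span of the `g^j v_r` for `r ∈ [1,d]` (resp. `r ∈ [d+1,σ]`)
and `j ∈ [−p_r, p_r−1]`: `W_d` and `W'_d` are `g`-stable, `W'_d = W_d^⊥`, `N^{k_0} W'_d = 0`,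
`N` restricted to `W_d` has kernel of dimension `d` (i.e. exactly `d` Jordan blocks), and
`N^{k_0}` restricted to `W_d` has kernel of dimension `k_0·d` (each block has size `≥ k_0`). -/
theorem stmt_11 [FiniteDimensional k V] (n σ : ℕ) (p : ℕ → ℕ)
    (hp : IsPartitionOf n σ p)
    (B : V →ₗ[k] V →ₗ[k] k)
    (halt : ∀ x : V, B x x = 0)
    (hnd : ∀ x : V, (∀ y : V, B x y = 0) → x = 0)
    (hdim : Module.finrank k V = 2 * n)
    (g : V ≃ₗ[k] V)
    (hg : ∀ x y : V, B (g x) (g y) = B x y)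
    (hgu : IsNilpotent (g.toLinearMap - LinearMap.id : Module.End k V))
    (v : ℕ → V)
    (hv1 : ∀ r ∈ Finset.Icc 1 σ, ∀ t, 1 ≤ t → t < r →
      ∀ i : ℤ, -(p t : ℤ) ≤ i → i ≤ (p t : ℤ) - 1 → B ((g ^ i) (v t)) (v r) = 0)
    (hv2 : ∀ r ∈ Finset.Icc 1 σ,
      ∀ i : ℤ, -(p r : ℤ) + 1 ≤ i → i ≤ (p r : ℤ) - 1 → B (v r) ((g ^ i) (v r)) = 0)
    (hv3 : ∀ r ∈ Finset.Icc 1 σ, B (v r) ((g ^ (p r : ℤ)) (v r)) = 1)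
    (hv_li : LinearIndependent k
      (fun q : {q : ℕ × ℤ // 1 ≤ q.1 ∧ q.1 ≤ σ ∧ -(p q.1 : ℤ) ≤ q.2 ∧ q.2 ≤ (p q.1 : ℤ) - 1} =>
        (g ^ q.1.2) (v q.1.1)))
    (hv_sp : Submodule.span k
      {y | ∃ t, 1 ≤ t ∧ t ≤ σ ∧ ∃ j : ℤ, -(p t : ℤ) ≤ j ∧ j ≤ (p t : ℤ) - 1 ∧ y = (g ^ j) (v t)}
      = ⊤)
    (k0 : ℕ) (hk0 : 0 < k0) (d : ℕ) (hd : d ∈ Finset.Icc 1 σ)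
    (hk0le : k0 ≤ 2 * p d)
    (hlek0 : 2 * (if d + 1 ≤ σ then p (d + 1) else 0) ≤ k0)
    (hrank : Module.finrank k
        (LinearMap.range ((g.toLinearMap - LinearMap.id : Module.End k V) ^ k0))
      = ∑ r ∈ Finset.Icc 1 d, (2 * p r - k0)) :
    let Wd : Submodule k V := Submodule.span k
      {y | ∃ r, 1 ≤ r ∧ r ≤ d ∧ ∃ j : ℤ, -(p r : ℤ) ≤ j ∧ j ≤ (p r : ℤ) - 1 ∧ y = (g ^ j) (v r)}
    let Wd' : Submodule k V := Submodule.span k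
      {y | ∃ r, d + 1 ≤ r ∧ r ≤ σ ∧
        ∃ j : ℤ, -(p r : ℤ) ≤ j ∧ j ≤ (p r : ℤ) - 1 ∧ y = (g ^ j) (v r)}
    let N : Module.End k V := g.toLinearMap - LinearMap.id
    Submodule.map g.toLinearMap Wd = Wd ∧
    Submodule.map g.toLinearMap Wd' = Wd' ∧
    Wd' = perpSub B Wd ∧
    Submodule.map (N ^ k0) Wd' = ⊥ ∧
    Module.finrank k ↥(LinearMap.ker N ⊓ Wd) = d ∧
    Module.finrank k ↥(LinearMap.ker (N ^ k0) ⊓ Wd) = k0 * d :=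
  stmt_11_general n σ p hp B halt hnd hdim g hg v hv1 hv2 hv3 hv_li k0 hk0 d hd hk0le hrank

end
end

section
/- Let k be a field and V a k-vector space with basis e_1, …, e_n, e'_1, …, e'_n, equipped with the alternating bilinear form determined by (e_i, e'_j) = δ_{ij}, (e_i, e_j) = 0, (e'_i, e'_j) = 0. Let p_* = (p_1 ≥ … ≥ p_σ) ∈ 𝒫_n and set P_r = p_1 + … + p_r (P_0 = 0). For each h ∈ [1,σ] let g_h ∈ GL(V) be the linear map fixing e_i and e'_i for all i ∉ [P_{h−1}+1, P_h] and given on the remaining basis vectors by: g_h(e_i) = e_i + e_{i+1} for i ∈ [P_{h−1}+1, P_h − 1]; g_h(e_{P_h}) = e_{P_h} + Σ_{v=1}^{p_h} (−1)^v e'_{P_h − v + 1}; and g_h(e'_{P_h − j}) = Σ_{v=0}^{p_h − j − 1} (−1)^v e'_{P_h − j − v} for j ∈ [0, p_h − 1]. Then each g_h is an isometry of the form, the g_h pairwise commute, and g := g_1 g_2 ⋯ g_σ is a unipotent isometry whose Jordan blocks have sizes 2p_1, 2p_2, …, 2p_σ; that is, V has a basis {w_{t,j} : t ∈ [1,σ],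 j ∈ [1, 2p_t]} with (g − 1)w_{t,j} = w_{t,j+1} for j ∈ [1, 2p_t − 1] and (g − 1)w_{t,2p_t} = 0. -/
/-!
Each `g_h` moves only the span `W_h` of the `e_i, e'_i` with `i` in the `h`-th block
`[P_{h-1}+1, P_h]` and maps it to itself; the `W_h` are mutually orthogonal and together span
`V`. Hence commutation, the isometry property and the action of `g` (which is `g_h` on `W_h`)
all reduce to a single block, where the isometry property is a direct computation.

On a block of size `q`, `g - 1` moves `e_{P_{h-1}+1} ↦ … ↦ e_{P_h}` along the chain and sends
`e_{P_h}` to `u = -e'_{P_h} + (lower terms)`. On the `e'` it lowers the flag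
`F_j = span (e'_{P_h - s} : j ≤ s < q)` by one step, with leading coefficient `-1`. So
`(g - 1)^m u` has leading term `±e'_{P_h - m}`, and the `2q` vectors
`(g - 1)^m e_{P_{h-1}+1}`, `m < 2q`, span `W_h` while `(g - 1)^{2q}` kills it. Altogether these
are `2n = dim V` spanning vectors, hence a basis.
-/

section

variable {k V : Type*} [Field k] [AddCommGroup V] [Module k V]

section LinearAlgebra

open Submodule

lemma bilin_eq_of_eqOn_span {R M N P : Type*} [CommSemiring R] [AddCommMonoid M]
    [AddCommMonoid N] [AddCommMonoid P] [Module R M] [Module R N] [Module R P]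
    {B₁ B₂ : M →ₗ[R] N →ₗ[R] P} {s : Set M} {t : Set N}
    (h : ∀ a ∈ s, ∀ b ∈ t, B₁ a b = B₂ a b) {a : M} {b : N}
    (ha : a ∈ span R s) (hb : b ∈ span R t) : B₁ a b = B₂ a b := by
  have hat : ∀ b ∈ t, B₁ a b = B₂ a b := fun b hb' =>
    LinearMap.eqOn_span (f := B₁.flip b) (g := B₂.flip b) (fun a ha' => h a ha' b hb') ha
  exact LinearMap.eqOn_span (f := B₁ a) (g := B₂ a) hat hb

lemma linearMap_ext_of_biSup_eq_top {ι P : Type*} [AddCommGroup P] [Module k P] {I : Set ι}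
    {W : ι → Submodule k V} (hW : ⨆ t ∈ I, W t = ⊤) {f f' : V →ₗ[k] P}
    (h : ∀ t ∈ I, ∀ v ∈ W t, f v = f' v) : f = f' := by
  have hle : ⨆ t ∈ I, W t ≤ LinearMap.eqLocus f f' :=
    iSup₂_le fun t ht v hv => LinearMap.mem_eqLocus.2 (h t ht v hv)
  rw [hW] at hle
  exact LinearMap.ext fun v => LinearMap.mem_eqLocus.1 (hle mem_top)

lemma bilin_ext_of_biSup_eq_top {ι : Type*} {I : Set ι} {W : ι → Submodule k V}
    (hW : ⨆ t ∈ I, W t = ⊤) {B₁ B₂ : V →ₗ[k] V →ₗ[k] k}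
    (h : ∀ t ∈ I, ∀ t' ∈ I, ∀ v ∈ W t, ∀ v' ∈ W t', B₁ v v' = B₂ v v') : B₁ = B₂ := by
  have hflip : ∀ t' ∈ I, ∀ v' ∈ W t', B₁.flip v' = B₂.flip v' := fun t' ht' v' hv' =>
    linearMap_ext_of_biSup_eq_top hW fun t ht v hv => h t ht t' ht' v hv v' hv'
  exact LinearMap.ext fun v => linearMap_ext_of_biSup_eq_top hW fun t' ht' v' hv' =>
    LinearMap.congr_fun (hflip t' ht' v' hv') v

lemma isometry_list_prod (B : V →ₗ[k] V →ₗ[k] k) {l : List (V ≃ₗ[k] V)}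
    (h : ∀ f ∈ l, ∀ v v', B (f v) (f v') = B v v') (v v' : V) :
    B (l.prod v) (l.prod v') = B v v' := by
  induction l with
  | nil => rfl
  | cons f l ih =>
    rw [List.prod_cons, LinearEquiv.mul_apply, LinearEquiv.mul_apply,
      h f List.mem_cons_self, ih fun f' hf' => h f' (List.mem_cons_of_mem f hf')]

lemma prod_map_range_succ_apply {F : ℕ → V ≃ₗ[k] V} {W : Submodule k V} {t m : ℕ}
    (hfix : ∀ s ∈ Finset.Icc 1 m, s ≠ t → ∀ v ∈ W, F s v = v) (hmaps : ∀ v ∈ W, F t v ∈ W)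
    {v : V} (hv : v ∈ W) :
    ((List.range m).map fun s => F (s + 1)).prod v = if t ∈ Finset.Icc 1 m then F t v else v := by
  induction m generalizing v with
  | zero => simp
  | succ m ih =>
    have ih' := @ih (fun s hs => hfix s (by simp at hs ⊢; omega))
    rw [List.range_succ, List.map_append, List.prod_append, List.map_singleton,
      List.prod_singleton, LinearEquiv.mul_apply]
    rcases eq_or_ne (m + 1) t with rfl | hmt
    · rw [ih' (hmaps v hv), if_neg (by simp), if_pos (by simp)]
    · rw [hfix (m + 1) (by simp) hmt v hv, ih' hv]
      exact if_congr (by simp; omega) rfl rfl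

lemma pow_sub_one_apply_eq_of_eqOn {W : Submodule k V} {f g : Module.End k V}
    (hmaps : ∀ v ∈ W, f v ∈ W) (hgf : ∀ v ∈ W, g v = f v) (m : ℕ) :
    ∀ v ∈ W, ((g - 1) ^ m) v = ((f - 1) ^ m) v := by
  induction m with
  | zero => simp
  | succ m ih =>
    intro v hv
    rw [pow_succ, pow_succ, Module.End.mul_apply, Module.End.mul_apply, LinearMap.sub_apply,
      Module.End.one_apply, hgf v hv, ih _ (sub_mem (hmaps v hv) hv), LinearMap.sub_apply,
      Module.End.one_apply]

end LinearAlgebra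

section Flag

open Finset Submodule

variable {y : ℕ → V} {q : ℕ}

variable (k y q) in
def tailSpan (j : ℕ) : Submodule k V := span k (y '' Set.Ico j q)

lemma tailSpan_anti {i j : ℕ} (hij : i ≤ j) : tailSpan k y q j ≤ tailSpan k y q i :=
  span_mono (Set.image_mono (Set.Ico_subset_Ico_left hij))

lemma mem_tailSpan {j s : ℕ} (hjs : j ≤ s) (hs : s < q) : y s ∈ tailSpan k y q j :=
  subset_span ⟨s, ⟨hjs, hs⟩, rfl⟩

lemma tailSpan_eq_bot {j : ℕ} (hj : q ≤ j) : tailSpan k y q j = ⊥ := by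
  simp [tailSpan, Set.Ico_eq_empty_of_le hj]

variable {g : Module.End k V}
  (hy : ∀ s < q, g (y s) = ∑ w ∈ range (q - s), (-1 : k) ^ w • y (s + w))
include hy

lemma sub_one_apply_eq_sum {s : ℕ} (hs : s < q) :
    (g - 1) (y s) = ∑ w ∈ range (q - (s + 1)), (-1 : k) ^ (w + 1) • y (s + (w + 1)) := by
  rw [LinearMap.sub_apply, Module.End.one_apply, hy s hs, show q - s = q - (s + 1) + 1 by omega,
    sum_range_succ']
  simp

lemma sub_one_apply_mem_tailSpan {s : ℕ} (hs : s < q) : (g - 1) (y s) ∈ tailSpan k y q (s + 1) := by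
  rw [sub_one_apply_eq_sum hy hs]
  exact sum_mem fun w hw => smul_mem _ _ (mem_tailSpan (by omega) (by simp at hw; omega))

lemma sub_one_apply_add_mem_tailSpan {s : ℕ} (hs : s + 1 < q) :
    (g - 1) (y s) + y (s + 1) ∈ tailSpan k y q (s + 2) := by
  rw [sub_one_apply_eq_sum hy (by omega), show q - (s + 1) = q - (s + 2) + 1 by omega,
    sum_range_succ']
  simp only [zero_add, pow_one, neg_smul, one_smul, neg_add_cancel_right]
  exact sum_mem fun w hw => smul_mem _ _ (mem_tailSpan (by omega) (by simp at hw; omega))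

lemma sub_one_mem_tailSpan {j : ℕ} {v : V} (hv : v ∈ tailSpan k y q j) :
    (g - 1) v ∈ tailSpan k y q (j + 1) := by
  suffices tailSpan k y q j ≤ (tailSpan k y q (j + 1)).comap (g - 1) from this hv
  refine span_le.2 ?_
  rintro _ ⟨s, ⟨hjs, hs⟩, rfl⟩
  exact tailSpan_anti (by omega) (sub_one_apply_mem_tailSpan hy hs)

lemma pow_sub_one_mem_tailSpan {j : ℕ} {v : V} (hv : v ∈ tailSpan k y q j) (m : ℕ) :
    ((g - 1) ^ m) v ∈ tailSpan k y q (j + m) := by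
  induction m with
  | zero => simpa using hv
  | succ m ih => rw [pow_succ', Module.End.mul_apply]; exact sub_one_mem_tailSpan hy ih

lemma pow_sub_one_apply_eq_zero {v : V} (hv : v ∈ tailSpan k y q 0) : ((g - 1) ^ q) v = 0 := by
  simpa [tailSpan_eq_bot le_rfl] using pow_sub_one_mem_tailSpan hy hv q

variable {v : V} (hv : v + y 0 ∈ tailSpan k y q 1)
include hv

lemma pow_sub_one_apply_add_mem_tailSpan :
    ∀ m < q, ((g - 1) ^ m) v + (-1 : k) ^ m • y m ∈ tailSpan k y q (m + 1)
  | 0, _ => by simpa using hv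
  | m + 1, hm => by
    have hsplit : ((g - 1) ^ (m + 1)) v + (-1 : k) ^ (m + 1) • y (m + 1) =
        (g - 1) (((g - 1) ^ m) v + (-1 : k) ^ m • y m) -
          (-1 : k) ^ m • ((g - 1) (y m) + y (m + 1)) := by
      rw [pow_succ', Module.End.mul_apply, map_add, map_smul]
      module
    rw [hsplit]
    exact sub_mem (sub_one_mem_tailSpan hy (pow_sub_one_apply_add_mem_tailSpan m (by omega)))
      (smul_mem _ _ (sub_one_apply_add_mem_tailSpan hy hm))

lemma tailSpan_le_span_pow :
    tailSpan k y q 0 ≤ span k ((fun m => ((g - 1) ^ m) v) '' Set.Iio q) := by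
  set S := span k ((fun m => ((g - 1) ^ m) v) '' Set.Iio q)
  suffices ∀ d j, j + d = q → tailSpan k y q j ≤ S from this q 0 (zero_add q)
  intro d
  induction d with
  | zero => intro j hj; rw [tailSpan_eq_bot (by omega)]; exact bot_le
  | succ d ih =>
    intro j hj
    refine span_le.2 ?_
    rintro _ ⟨s, ⟨hjs, hs⟩, rfl⟩
    rcases hjs.eq_or_lt with rfl | hlt
    · have hys : y j =
          (-1 : k) ^ j • ((((g - 1) ^ j) v + (-1 : k) ^ j • y j) - ((g - 1) ^ j) v) := by
        rw [add_sub_cancel_left, smul_smul, ← pow_add, (Even.add_self j).neg_one_pow, one_smul]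
      rw [hys]
      exact smul_mem _ _ (sub_mem
        (ih (j + 1) (by omega) (pow_sub_one_apply_add_mem_tailSpan hy hv j hs))
        (subset_span ⟨j, hs, rfl⟩))
    · exact ih (j + 1) (by omega) (mem_tailSpan hlt hs)

end Flag

section Block

open Finset Submodule

variable (k) in
def blockSpan (x y : ℕ → V) (q : ℕ) : Submodule k V := span k (x '' Set.Iio q ∪ y '' Set.Iio q)

lemma x_mem_blockSpan {x y : ℕ → V} {q r : ℕ} (hr : r < q) : x r ∈ blockSpan k x y q :=
  subset_span (Or.inl ⟨r, hr, rfl⟩)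

lemma y_mem_blockSpan {x y : ℕ → V} {q s : ℕ} (hs : s < q) : y s ∈ blockSpan k x y q :=
  subset_span (Or.inr ⟨s, hs, rfl⟩)

lemma sum_smul_y_mem_span {y : ℕ → V} {q : ℕ} {S : Finset ℕ} (hS : ∀ s ∈ S, s < q) (c : ℕ → k) :
    ∑ s ∈ S, c s • y s ∈ span k (y '' Set.Iio q) :=
  sum_mem fun s hs => smul_mem _ _ (subset_span ⟨s, hS s hs, rfl⟩)

lemma tail_add_mem_tailSpan {y : ℕ → V} {q : ℕ} (hq : 0 < q) :
    ∑ s ∈ range q, (-1 : k) ^ (s + 1) • y s + y 0 ∈ tailSpan k y q 1 := by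
  obtain ⟨q, rfl⟩ := Nat.exists_eq_add_of_lt hq
  rw [zero_add, sum_range_succ']
  simp only [zero_add, pow_one, neg_smul, one_smul, neg_add_cancel_right]
  exact sum_mem fun s hs => smul_mem _ _ (mem_tailSpan (by omega) (by simp at hs; omega))

structure IsSymplecticFamily (B : V →ₗ[k] V →ₗ[k] k) (x y : ℕ → V) (q : ℕ) : Prop where
  x_y : ∀ r < q, ∀ s < q, B (x r) (y s) = if r = s then 1 else 0
  x_x : ∀ r < q, ∀ r' < q, B (x r) (x r') = 0
  y_y : ∀ s < q, ∀ s' < q, B (y s) (y s') = 0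

namespace IsSymplecticFamily

variable {B : V →ₗ[k] V →ₗ[k] k} {x y : ℕ → V} {q : ℕ} (hS : IsSymplecticFamily B x y q)
include hS

lemma bilin_x_sum {r : ℕ} (hr : r < q) {S : Finset ℕ} (hSq : ∀ s ∈ S, s < q) (c : ℕ → k) :
    B (x r) (∑ s ∈ S, c s • y s) = if r ∈ S then c r else 0 := by
  rw [map_sum, ← sum_ite_eq S r c]
  refine sum_congr rfl fun s hs => ?_
  rw [map_smul, hS.x_y r hr s (hSq s hs), smul_eq_mul, mul_ite, mul_one, mul_zero]

lemma eq_zero_of_mem_span_y {a b : V} (ha : a ∈ span k (y '' Set.Iio q))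
    (hb : b ∈ span k (y '' Set.Iio q)) : B a b = 0 := by
  refine bilin_eq_of_eqOn_span (B₂ := 0) ?_ ha hb
  rintro _ ⟨s, hs, rfl⟩ _ ⟨s', hs', rfl⟩
  exact hS.y_y s hs s' hs'

end IsSymplecticFamily

/-- The action of `g_h` on its block, read from the top: `x r = e_{P_h - r}` and
`y s = e'_{P_h - s}` for `r, s < q = p_h`. -/
structure IsUnipotentBlock (g : Module.End k V) (x y : ℕ → V) (q : ℕ) : Prop where
  apply_x_succ : ∀ r, r + 1 < q → g (x (r + 1)) = x (r + 1) + x r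
  apply_x_zero : g (x 0) = x 0 + ∑ s ∈ range q, (-1 : k) ^ (s + 1) • y s
  apply_y : ∀ s < q, g (y s) = ∑ w ∈ range (q - s), (-1 : k) ^ w • y (s + w)

namespace IsUnipotentBlock

variable {g : Module.End k V} {x y : ℕ → V} {q : ℕ} (hb : IsUnipotentBlock g x y q)
include hb

lemma apply_y_eq_sum_Ico {s : ℕ} (hs : s < q) :
    g (y s) = ∑ s' ∈ Ico s q, (-1 : k) ^ (s' - s) • y s' := by
  rw [hb.apply_y s hs, sum_Ico_eq_sum_range]
  simp

lemma apply_y_mem_span {s : ℕ} (hs : s < q) : g (y s) ∈ span k (y '' Set.Iio q) := by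
  rw [hb.apply_y_eq_sum_Ico hs]
  exact sum_smul_y_mem_span (fun s' hs' => (mem_Ico.1 hs').2) _

lemma mapsTo_blockSpan {v : V} (hv : v ∈ blockSpan k x y q) : g v ∈ blockSpan k x y q := by
  suffices blockSpan k x y q ≤ (blockSpan k x y q).comap g from this hv
  refine span_le.2 ?_
  rintro _ (⟨r, hr, rfl⟩ | ⟨s, hs, rfl⟩)
  · rcases r with _ | r
    · rw [SetLike.mem_coe, mem_comap, hb.apply_x_zero]
      exact add_mem (x_mem_blockSpan hr) (sum_mem fun s hs =>
        smul_mem _ _ (y_mem_blockSpan (mem_range.1 hs)))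
    · rw [SetLike.mem_coe, mem_comap, hb.apply_x_succ r hr]
      exact add_mem (x_mem_blockSpan hr) (x_mem_blockSpan (by simp at hr; omega))
  · rw [SetLike.mem_coe, mem_comap, hb.apply_y_eq_sum_Ico hs]
    exact sum_mem fun s' hs' => smul_mem _ _ (y_mem_blockSpan (mem_Ico.1 hs').2)

lemma pow_sub_one_apply_x {j : ℕ} (hj : j < q) : ((g - 1) ^ j) (x (q - 1)) = x (q - 1 - j) := by
  induction j with
  | zero => simp
  | succ j ih =>
    rw [pow_succ', Module.End.mul_apply, ih (by omega), LinearMap.sub_apply,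
      Module.End.one_apply, show q - 1 - j = q - 1 - (j + 1) + 1 by omega,
      hb.apply_x_succ _ (by omega), add_sub_cancel_left]

lemma pow_sub_one_apply_x_eq_tail (hq : 0 < q) :
    ((g - 1) ^ q) (x (q - 1)) = ∑ s ∈ range q, (-1 : k) ^ (s + 1) • y s := by
  cases q with
  | zero => omega
  | succ q =>
  rw [pow_succ', Module.End.mul_apply, hb.pow_sub_one_apply_x (by omega), Nat.add_sub_cancel,
    Nat.sub_self, LinearMap.sub_apply, Module.End.one_apply,
    hb.apply_x_zero, add_sub_cancel_left]

lemma pow_two_mul_sub_one_apply_x (hq : 0 < q) : ((g - 1) ^ (2 * q)) (x (q - 1)) = 0 := by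
  have htail := tail_add_mem_tailSpan (k := k) (y := y) hq
  rw [two_mul, pow_add, Module.End.mul_apply, hb.pow_sub_one_apply_x_eq_tail hq]
  refine pow_sub_one_apply_eq_zero hb.apply_y ?_
  rw [← add_sub_cancel_right (∑ s ∈ range q, (-1 : k) ^ (s + 1) • y s) (y 0)]
  exact sub_mem (tailSpan_anti (Nat.zero_le 1) htail) (mem_tailSpan le_rfl hq)

lemma blockSpan_le_span_pow (hq : 0 < q) :
    blockSpan k x y q ≤ span k ((fun m => ((g - 1) ^ m) (x (q - 1))) '' Set.Iio (2 * q)) := by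
  refine span_le.2 ?_
  rintro _ (⟨r, hr, rfl⟩ | ⟨s, hs, rfl⟩)
  · rw [Set.mem_Iio] at hr
    refine subset_span ⟨q - 1 - r, by rw [Set.mem_Iio]; omega, ?_⟩
    change ((g - 1) ^ (q - 1 - r)) (x (q - 1)) = x r
    rw [hb.pow_sub_one_apply_x (by omega), show q - 1 - (q - 1 - r) = r by omega]
  · have hle := tailSpan_le_span_pow hb.apply_y (tail_add_mem_tailSpan (k := k) (y := y) hq)
    refine span_mono ?_ (hle (mem_tailSpan (Nat.zero_le s) hs))
    rintro _ ⟨m, hm, rfl⟩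
    refine ⟨m + q, by simp at hm ⊢; omega, ?_⟩
    simp only
    rw [pow_add, Module.End.mul_apply, hb.pow_sub_one_apply_x_eq_tail hq]

variable {B : V →ₗ[k] V →ₗ[k] k} (hS : IsSymplecticFamily B x y q)
include hS

lemma bilin_x_apply_y {r s : ℕ} (hr : r < q) (hs : s < q) :
    B (x r) (g (y s)) = if s ≤ r then (-1 : k) ^ (r - s) else 0 := by
  rw [hb.apply_y_eq_sum_Ico hs, hS.bilin_x_sum hr fun s' hs' => (mem_Ico.1 hs').2]
  simp [mem_Ico, hr]

lemma isometry_x_y {r s : ℕ} (hr : r < q) (hs : s < q) :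
    B (g (x r)) (g (y s)) = B (x r) (y s) := by
  rw [hS.x_y r hr s hs]
  rcases r with _ | r
  · rw [hb.apply_x_zero, map_add, LinearMap.add_apply, hb.bilin_x_apply_y hS hr hs,
      hS.eq_zero_of_mem_span_y (sum_smul_y_mem_span (fun s hs => mem_range.1 hs) _)
        (hb.apply_y_mem_span hs)]
    simp [eq_comm]
  · rw [hb.apply_x_succ r hr, map_add, LinearMap.add_apply, hb.bilin_x_apply_y hS hr hs,
      hb.bilin_x_apply_y hS (by omega) hs]
    rcases lt_trichotomy s (r + 1) with h | rfl | h
    · rw [if_pos h.le, if_pos (by omega), if_neg h.ne', show r + 1 - s = r - s + 1 by omega,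
        pow_succ]
      ring
    · simp
    · rw [if_neg (by omega), if_neg (by omega), if_neg h.ne, add_zero]

lemma isometry_x_x (hB : B.IsAlt) {r r' : ℕ} (hr : r < q) (hr' : r' < q) :
    B (g (x r)) (g (x r')) = B (x r) (x r') := by
  wlog hle : r ≤ r' generalizing r r'
  · rw [← hB.neg, this hr' hr (by omega), hB.neg]
  rcases hle.eq_or_lt with rfl | hlt
  · rw [hB.self_eq_zero, hB.self_eq_zero]
  obtain ⟨r', rfl⟩ : ∃ j, r' = j + 1 := ⟨r' - 1, by omega⟩
  have htail_x : ∀ j < q, B (∑ s ∈ range q, (-1 : k) ^ (s + 1) • y s) (x j) = -(-1 : k) ^ (j + 1) :=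
    fun j hj => by
      rw [← hB.neg, hS.bilin_x_sum hj (fun s hs => mem_range.1 hs), if_pos (mem_range.2 hj)]
  rw [hS.x_x r hr _ hr', hb.apply_x_succ r' hr']
  rcases r with _ | r
  · rw [hb.apply_x_zero]
    simp only [map_add, LinearMap.add_apply]
    rw [hS.x_x 0 hr _ hr', hS.x_x 0 hr r' (by omega), htail_x _ hr', htail_x r' (by omega),
      pow_succ]
    ring
  · rw [hb.apply_x_succ r hr]
    simp only [map_add, LinearMap.add_apply]
    rw [hS.x_x _ hr _ hr', hS.x_x _ hr r' (by omega), hS.x_x r (by omega) _ hr',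
      hS.x_x r (by omega) r' (by omega)]
    ring

lemma isometry (hB : B.IsAlt) {v v' : V} (hv : v ∈ blockSpan k x y q)
    (hv' : v' ∈ blockSpan k x y q) : B (g v) (g v') = B v v' := by
  refine bilin_eq_of_eqOn_span (B₁ := B.compl₁₂ g g) ?_ hv hv'
  rintro _ (⟨r, hr, rfl⟩ | ⟨s, hs, rfl⟩) _ (⟨r', hr', rfl⟩ | ⟨s', hs', rfl⟩)
  · exact hb.isometry_x_x hS hB hr hr'
  · exact hb.isometry_x_y hS hr hs'
  · rw [LinearMap.compl₁₂_apply, ← hB.neg, hb.isometry_x_y hS hr' hs, hB.neg]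
  · rw [LinearMap.compl₁₂_apply, hS.eq_zero_of_mem_span_y (hb.apply_y_mem_span hs)
      (hb.apply_y_mem_span hs'), hS.y_y s hs s' hs']

end IsUnipotentBlock

end Block

section BlockDecomposition

open Submodule

variable {ι : Type*} {I : Set ι} {W : ι → Submodule k V} {F : ι → V ≃ₗ[k] V}
  (hfix : ∀ h ∈ I, ∀ t ∈ I, h ≠ t → ∀ v ∈ W t, F h v = v)
  (hmaps : ∀ h ∈ I, ∀ v ∈ W h, F h v ∈ W h)
include hfix hmaps

lemma commute_of_blocks (hW : ⨆ t ∈ I, W t = ⊤) {h h' : ι} (hh : h ∈ I) (hh' : h' ∈ I) :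
    F h * F h' = F h' * F h := by
  rcases eq_or_ne h h' with rfl | hne
  · rfl
  refine LinearEquiv.toLinearMap_injective (linearMap_ext_of_biSup_eq_top hW fun t ht v hv => ?_)
  simp only [LinearEquiv.coe_toLinearMap_mul, Module.End.mul_apply, LinearEquiv.coe_coe]
  by_cases hth : t = h
  · subst hth
    rw [hfix h' hh' t ht hne.symm v hv, hfix h' hh' t ht hne.symm _ (hmaps t ht v hv)]
  by_cases hth' : t = h'
  · subst hth'
    rw [hfix h hh t ht hne v hv, hfix h hh t ht hne _ (hmaps t ht v hv)]
  · rw [hfix h hh t ht (Ne.symm hth) v hv, hfix h' hh' t ht (Ne.symm hth') v hv,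
      hfix h hh t ht (Ne.symm hth) v hv]

lemma isometry_of_blocks (hW : ⨆ t ∈ I, W t = ⊤) (B : V →ₗ[k] V →ₗ[k] k)
    (horth : ∀ t ∈ I, ∀ t' ∈ I, t ≠ t' → ∀ v ∈ W t, ∀ v' ∈ W t', B v v' = 0) {h : ι} (hh : h ∈ I)
    (hiso : ∀ v ∈ W h, ∀ v' ∈ W h, B (F h v) (F h v') = B v v') (v v' : V) :
    B (F h v) (F h v') = B v v' := by
  suffices B.compl₁₂ (F h : V →ₗ[k] V) (F h : V →ₗ[k] V) = B from
    LinearMap.congr_fun₂ this v v'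
  refine bilin_ext_of_biSup_eq_top hW fun t ht t' ht' v hv v' hv' => ?_
  simp only [LinearMap.compl₁₂_apply, LinearEquiv.coe_coe]
  by_cases hth : t = h <;> by_cases hth' : t' = h
  · subst hth hth'
    exact hiso v hv v' hv'
  · subst t
    rw [hfix h hh t' ht' (Ne.symm hth') v' hv',
      horth h hh t' ht' (Ne.symm hth') _ (hmaps h hh v hv) v' hv',
      horth h hh t' ht' (Ne.symm hth') v hv v' hv']
  · subst t'
    rw [hfix h hh t ht (Ne.symm hth) v hv, horth t ht h hh hth v hv _ (hmaps h hh v' hv'),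
      horth t ht h hh hth v hv v' hv']
  · rw [hfix h hh t ht (Ne.symm hth) v hv, hfix h hh t' ht' (Ne.symm hth') v' hv']

end BlockDecomposition

section JordanBasis

open Submodule

variable {ι : Type*} {I : Set ι} {g : Module.End k V} {f : ι → Module.End k V}
  {x y : ι → ℕ → V} {q : ι → ℕ} (hb : ∀ t ∈ I, IsUnipotentBlock (f t) (x t) (y t) (q t))
  (hq : ∀ t ∈ I, 0 < q t) (hg : ∀ t ∈ I, ∀ v ∈ blockSpan k (x t) (y t) (q t), g v = f t v)
include hb hq hg

lemma pow_sub_one_apply_x_eq {t : ι} (ht : t ∈ I) (m : ℕ) :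
    ((g - 1) ^ m) (x t (q t - 1)) = ((f t - 1) ^ m) (x t (q t - 1)) :=
  pow_sub_one_apply_eq_of_eqOn (fun _ hv => (hb t ht).mapsTo_blockSpan hv) (hg t ht) m _
    (x_mem_blockSpan (by have := hq t ht; omega))

lemma pow_sub_one_apply_x_eq_zero {t : ι} (ht : t ∈ I) {m : ℕ} (hm : 2 * q t ≤ m) :
    ((g - 1) ^ m) (x t (q t - 1)) = 0 := by
  rw [pow_sub_one_apply_x_eq hb hq hg ht, ← Nat.sub_add_cancel hm, pow_add, Module.End.mul_apply,
    (hb t ht).pow_two_mul_sub_one_apply_x (hq t ht), map_zero]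

lemma eq_top_of_pow_sub_one_apply_x_mem (htop : ⨆ t ∈ I, blockSpan k (x t) (y t) (q t) = ⊤)
    {S : Submodule k V} (hS : ∀ t ∈ I, ∀ m < 2 * q t, ((g - 1) ^ m) (x t (q t - 1)) ∈ S) :
    S = ⊤ := by
  rw [eq_top_iff, ← htop]
  refine iSup₂_le fun t ht => ((hb t ht).blockSpan_le_span_pow (hq t ht)).trans (span_le.2 ?_)
  rintro _ ⟨m, hm, rfl⟩
  simp only [SetLike.mem_coe]
  rw [← pow_sub_one_apply_x_eq hb hq hg ht m]
  exact hS t ht m hm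

lemma pow_sub_one_eq_zero (htop : ⨆ t ∈ I, blockSpan k (x t) (y t) (q t) = ⊤) {N : ℕ}
    (hN : ∀ t ∈ I, 2 * q t ≤ N) : (g - 1) ^ N = 0 := by
  refine LinearMap.ker_eq_top.1 (eq_top_of_pow_sub_one_apply_x_mem hb hq hg htop fun t ht m _ => ?_)
  rw [LinearMap.mem_ker, ← Module.End.mul_apply, ← pow_add]
  exact pow_sub_one_apply_x_eq_zero hb hq hg ht (by have := hN t ht; omega)

end JordanBasis

section Partition

open Finset

lemma partialSum_pred_add (p : ℕ → ℕ) {h : ℕ} (hh : 1 ≤ h) :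
    partialSum p (h - 1) + p h = partialSum p h := by
  obtain ⟨h, rfl⟩ : ∃ h', h = h' + 1 := ⟨h - 1, by omega⟩
  rw [partialSum, partialSum, sum_Icc_succ_top (by omega), Nat.add_sub_cancel]

lemma le_partialSum (p : ℕ → ℕ) {h : ℕ} (hh : 1 ≤ h) : p h ≤ partialSum p h :=
  partialSum_pred_add p hh ▸ Nat.le_add_left _ _

lemma partialSum_mono (p : ℕ → ℕ) : Monotone (partialSum p) := fun _ _ h =>
  sum_le_sum_of_subset (Icc_subset_Icc_right h)

lemma exists_mem_block (p : ℕ → ℕ) {m i : ℕ} (hi : 1 ≤ i) (him : i ≤ partialSum p m) :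
    ∃ t ∈ Icc 1 m, partialSum p (t - 1) < i ∧ i ≤ partialSum p t := by
  induction m with
  | zero => simp [partialSum] at him; omega
  | succ m ih =>
    by_cases h : i ≤ partialSum p m
    · obtain ⟨t, ht, hlo, hhi⟩ := ih h
      exact ⟨t, by simp at ht ⊢; omega, hlo, hhi⟩
    · exact ⟨m + 1, by simp, by simpa using h, him⟩

variable {n σ : ℕ} {p : ℕ → ℕ}

def jordanIndex (σ : ℕ) (p : ℕ → ℕ) : Finset (ℕ × ℕ) :=
  (Icc 1 σ).biUnion fun t => {t} ×ˢ Icc 1 (2 * p t)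

lemma mem_jordanIndex (q : ℕ × ℕ) :
    q ∈ jordanIndex σ p ↔ 1 ≤ q.1 ∧ q.1 ≤ σ ∧ 1 ≤ q.2 ∧ q.2 ≤ 2 * p q.1 := by
  obtain ⟨t, j⟩ := q
  simp only [jordanIndex, mem_biUnion, mem_product, mem_singleton, mem_Icc]
  constructor
  · rintro ⟨t, ht, rfl, hj⟩
    exact ⟨ht.1, ht.2, hj⟩
  · rintro ⟨h1, h2, hj⟩
    exact ⟨t, ⟨h1, h2⟩, rfl, hj⟩

lemma index_not_mem_block {t h r : ℕ} (ht : 1 ≤ t) (hh : 1 ≤ h) (hne : t ≠ h) (hr : r < p t) :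
    partialSum p t - r < partialSum p (h - 1) + 1 ∨ partialSum p h < partialSum p t - r := by
  have := partialSum_pred_add p ht
  rcases lt_or_gt_of_ne hne with hlt | hlt
  · have := partialSum_mono p (show t ≤ h - 1 by omega)
    omega
  · have := partialSum_mono p (show h ≤ t - 1 by omega)
    omega

variable (hp : IsPartitionOf n σ p)
include hp

lemma IsPartitionOf.partialSum_eq : partialSum p σ = n := hp.2.2.2

lemma IsPartitionOf.partialSum_le {t : ℕ} (ht : t ≤ σ) : partialSum p t ≤ n :=
  hp.partialSum_eq ▸ partialSum_mono p ht

lemma IsPartitionOf.pos {t : ℕ} (ht : t ∈ Icc 1 σ) : 0 < p t := hp.2.1 t ht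

lemma IsPartitionOf.index_mem {t r : ℕ} (ht : t ∈ Icc 1 σ) (hr : r < p t) :
    partialSum p t - r ∈ Icc 1 n := by
  have := partialSum_pred_add p (mem_Icc.1 ht).1
  have := hp.partialSum_le (mem_Icc.1 ht).2
  simp only [mem_Icc]
  omega

lemma IsPartitionOf.card_jordanIndex : (jordanIndex σ p).card = 2 * n := by
  rw [jordanIndex, card_biUnion]
  · simp [← mul_sum, hp.2.2.2]
  · intro t _ t' _ hne
    simp only [Function.onFun, disjoint_left, mem_product, mem_singleton]
    rintro _ ⟨rfl, -⟩ ⟨rfl, -⟩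
    exact hne rfl

end Partition

section SymplecticSetting

open Finset Submodule

lemma isUnipotentBlock_of_apply {g : V ≃ₗ[k] V} {e e' : ℕ → V} {a P q : ℕ} (hP : a + q = P)
    (hstep : ∀ i, a + 1 ≤ i → i ≤ P - 1 → g (e i) = e i + e (i + 1))
    (hlast : g (e P) = e P + ∑ w ∈ Icc 1 q, (-1 : k) ^ w • e' (P - w + 1))
    (hdual : ∀ j, j ≤ q - 1 →
      g (e' (P - j)) = ∑ w ∈ range (q - j), (-1 : k) ^ w • e' (P - j - w)) :
    IsUnipotentBlock (g : Module.End k V) (fun r => e (P - r)) (fun s => e' (P - s)) q := by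
  refine ⟨fun r hr => ?_, ?_, fun s hs => ?_⟩
  · simp only [LinearEquiv.coe_coe]
    rw [hstep _ (by omega) (by omega), show P - (r + 1) + 1 = P - r by omega]
  · simp only [LinearEquiv.coe_coe, Nat.sub_zero]
    have hshift : ∀ f : ℕ → V, ∑ w ∈ Icc 1 q, f w = ∑ s ∈ range q, f (s + 1) := fun f => by
      rw [range_eq_Ico, sum_Ico_add' f 0 q 1]
      rfl
    rw [hlast, hshift]
    refine congrArg _ (sum_congr rfl fun s hs => ?_)
    rw [show P - (s + 1) + 1 = P - s by simp at hs; omega]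
  · simp only [LinearEquiv.coe_coe]
    rw [hdual s (by omega)]
    simp_rw [Nat.sub_sub]

variable (k) in
def partBlock (e e' : ℕ → V) (p : ℕ → ℕ) (t : ℕ) : Submodule k V :=
  blockSpan k (fun r => e (partialSum p t - r)) (fun s => e' (partialSum p t - s)) (p t)

lemma apply_eq_self_of_mem_partBlock {G : ℕ → V ≃ₗ[k] V} {e e' : ℕ → V} {p : ℕ → ℕ}
    {n σ : ℕ} (hp : IsPartitionOf n σ p)
    (hGfix : ∀ h ∈ Icc 1 σ, ∀ i ∈ Icc 1 n, (i < partialSum p (h - 1) + 1 ∨ partialSum p h < i) →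
      G h (e i) = e i ∧ G h (e' i) = e' i)
    {h t : ℕ} (hh : h ∈ Icc 1 σ) (ht : t ∈ Icc 1 σ) (hne : h ≠ t) {v : V}
    (hv : v ∈ partBlock k e e' p t) : G h v = v := by
  suffices partBlock k e e' p t ≤ LinearMap.eqLocus (G h : V →ₗ[k] V) LinearMap.id from
    LinearMap.mem_eqLocus.1 (this hv)
  have hfix_r := fun r (hr : r < p t) => hGfix h hh _ (hp.index_mem ht hr)
    (index_not_mem_block (mem_Icc.1 ht).1 (mem_Icc.1 hh).1 hne.symm hr)
  refine span_le.2 ?_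
  rintro _ (⟨r, hr, rfl⟩ | ⟨s, hs, rfl⟩)
  · exact (hfix_r r hr).1
  · exact (hfix_r s hs).2

structure IsSymplecticBasis (B : V →ₗ[k] V →ₗ[k] k) (e e' : ℕ → V) (n : ℕ) : Prop where
  linearIndependent : LinearIndependent k
    (Sum.elim (fun i : {i : ℕ // 1 ≤ i ∧ i ≤ n} => e i.1)
      (fun i : {i : ℕ // 1 ≤ i ∧ i ≤ n} => e' i.1))
  span_eq_top : span k (Set.range
    (Sum.elim (fun i : {i : ℕ // 1 ≤ i ∧ i ≤ n} => e i.1)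
      (fun i : {i : ℕ // 1 ≤ i ∧ i ≤ n} => e' i.1))) = ⊤
  isAlt : B.IsAlt
  e_e' : ∀ i ∈ Icc 1 n, ∀ j ∈ Icc 1 n, B (e i) (e' j) = if i = j then 1 else 0
  e_e : ∀ i ∈ Icc 1 n, ∀ j ∈ Icc 1 n, B (e i) (e j) = 0
  e'_e' : ∀ i ∈ Icc 1 n, ∀ j ∈ Icc 1 n, B (e' i) (e' j) = 0

namespace IsSymplecticBasis

variable {B : V →ₗ[k] V →ₗ[k] k} {e e' : ℕ → V} {n : ℕ} (hE : IsSymplecticBasis B e e' n)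
include hE

lemma finrank_eq : Module.finrank k V = 2 * n := by
  have hcard : Nat.card (Set.Icc 1 n) = n := by simp
  have : Finite (Set.Icc 1 n) := (Set.finite_Icc 1 n).to_subtype
  rw [Module.finrank_eq_nat_card_basis (Module.Basis.mk hE.linearIndependent hE.span_eq_top.ge)]
  exact (Nat.card_sum (α := Set.Icc 1 n) (β := Set.Icc 1 n)).trans (by rw [hcard, two_mul])

lemma isSymplecticFamily {P q : ℕ} (hqP : q ≤ P) (hPn : P ≤ n) :
    IsSymplecticFamily B (fun r => e (P - r)) (fun s => e' (P - s)) q where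
  x_y r hr s hs := by
    rw [hE.e_e' _ (by simp; omega) _ (by simp; omega)]
    exact if_congr (by omega) rfl rfl
  x_x r hr r' hr' := hE.e_e _ (by simp; omega) _ (by simp; omega)
  y_y s hs s' hs' := hE.e'_e' _ (by simp; omega) _ (by simp; omega)

variable {σ : ℕ} {p : ℕ → ℕ} (hp : IsPartitionOf n σ p)
include hp

lemma iSup_partBlock_eq_top : ⨆ t ∈ (Icc 1 σ : Set ℕ), partBlock k e e' p t = ⊤ := by
  have hmem : ∀ i, 1 ≤ i → i ≤ n → ∃ t ∈ Icc 1 σ, ∃ r < p t, i = partialSum p t - r := by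
    intro i hi1 hi2
    obtain ⟨t, ht, hlo, hhi⟩ := exists_mem_block p hi1 (hp.partialSum_eq ▸ hi2)
    have := partialSum_pred_add p (mem_Icc.1 ht).1
    exact ⟨t, ht, partialSum p t - i, by omega, by omega⟩
  rw [eq_top_iff, ← hE.span_eq_top, span_le]
  rintro _ ⟨⟨i, hi1, hi2⟩ | ⟨i, hi1, hi2⟩, rfl⟩ <;> obtain ⟨t, ht, r, hr, rfl⟩ := hmem i hi1 hi2
  · exact (le_iSup₂ (f := fun t _ => partBlock k e e' p t) t ht) (x_mem_blockSpan hr)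
  · exact (le_iSup₂ (f := fun t _ => partBlock k e e' p t) t ht) (y_mem_blockSpan hr)

lemma bilin_eq_zero_of_mem_partBlock {t t' : ℕ} (ht : t ∈ Icc 1 σ) (ht' : t' ∈ Icc 1 σ)
    (hne : t ≠ t') {v v' : V} (hv : v ∈ partBlock k e e' p t) (hv' : v' ∈ partBlock k e e' p t') :
    B v v' = 0 := by
  have hidx : ∀ r < p t, ∀ s < p t', partialSum p t - r ≠ partialSum p t' - s := fun r hr s hs => by
    have := index_not_mem_block (mem_Icc.1 ht).1 (mem_Icc.1 ht').1 hne hr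
    have := partialSum_pred_add p (mem_Icc.1 ht').1
    omega
  refine bilin_eq_of_eqOn_span (B₂ := 0) ?_ hv hv'
  rintro _ (⟨r, hr, rfl⟩ | ⟨r, hr, rfl⟩) _ (⟨s, hs, rfl⟩ | ⟨s, hs, rfl⟩) <;>
    have hi := hp.index_mem ht hr <;> have hj := hp.index_mem ht' hs
  · exact hE.e_e _ hi _ hj
  · simpa [hidx r hr s hs] using hE.e_e' _ hi _ hj
  · rw [LinearMap.zero_apply, LinearMap.zero_apply, ← hE.isAlt.neg, hE.e_e' _ hj _ hi,
      if_neg (hidx r hr s hs).symm, neg_zero]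
  · exact hE.e'_e' _ hi _ hj

lemma isometry_of_isUnipotentBlock {G : ℕ → V ≃ₗ[k] V}
    (hb : ∀ h ∈ Icc 1 σ, IsUnipotentBlock (G h : Module.End k V)
      (fun r => e (partialSum p h - r)) (fun s => e' (partialSum p h - s)) (p h))
    (hfix : ∀ h ∈ Icc 1 σ, ∀ t ∈ Icc 1 σ, h ≠ t → ∀ v ∈ partBlock k e e' p t, G h v = v)
    {h : ℕ} (hh : h ∈ Icc 1 σ) : ∀ v v' : V, B (G h v) (G h v') = B v v' :=
  isometry_of_blocks hfix (fun h hh _ hv => (hb h hh).mapsTo_blockSpan hv)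
    (hE.iSup_partBlock_eq_top hp) B
    (fun _ ht _ ht' hne _ hv _ hv' => hE.bilin_eq_zero_of_mem_partBlock hp ht ht' hne hv hv') hh
    fun _ hv _ hv' => (hb h hh).isometry (hE.isSymplecticFamily
      (le_partialSum p (mem_Icc.1 hh).1) (hp.partialSum_le (mem_Icc.1 hh).2)) hE.isAlt hv hv'

end IsSymplecticBasis

end SymplecticSetting

section JordanVectors

open Finset Submodule

/-- `w_{t,j} = (g - 1)^{j-1} e_{P_{t-1}+1}`; the index `P_t - (p_t - 1)` is `P_{t-1} + 1`. -/
def jordanVec (g : V ≃ₗ[k] V) (e : ℕ → V) (p : ℕ → ℕ) (t j : ℕ) : V :=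
  (((g : Module.End k V) - 1) ^ (j - 1)) (e (partialSum p t - (p t - 1)))

lemma apply_jordanVec_sub_self (g : V ≃ₗ[k] V) (e : ℕ → V) (p : ℕ → ℕ) (t : ℕ) {j : ℕ}
    (hj : 1 ≤ j) :
    g (jordanVec g e p t j) - jordanVec g e p t j = jordanVec g e p t (j + 1) := by
  obtain ⟨j, rfl⟩ : ∃ j', j = j' + 1 := ⟨j - 1, by omega⟩
  simp only [jordanVec, Nat.add_sub_cancel, pow_succ' _ j, Module.End.mul_apply,
    LinearMap.sub_apply, Module.End.one_apply, LinearEquiv.coe_coe]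

variable {B : V →ₗ[k] V →ₗ[k] k} {e e' : ℕ → V} {n σ : ℕ} {p : ℕ → ℕ}
  (hp : IsPartitionOf n σ p) {G : ℕ → V ≃ₗ[k] V}
  (hb : ∀ t ∈ Icc 1 σ, IsUnipotentBlock (G t : Module.End k V) (fun r => e (partialSum p t - r))
    (fun s => e' (partialSum p t - s)) (p t))
  {g : V ≃ₗ[k] V} (hg : ∀ t ∈ Icc 1 σ, ∀ v ∈ partBlock k e e' p t, g v = G t v)
include hp hb hg

lemma jordanVec_two_mul_add_one_eq_zero {t : ℕ} (ht : t ∈ Icc 1 σ) :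
    jordanVec g e p t (2 * p t + 1) = 0 :=
  pow_sub_one_apply_x_eq_zero (I := ↑(Icc 1 σ)) (f := fun t => (G t : Module.End k V))
    (x := fun t r => e (partialSum p t - r)) hb (fun t ht => hp.pos ht) hg ht (by omega)

variable (hE : IsSymplecticBasis B e e' n)
include hE

lemma span_jordanVec_eq_top :
    span k (Set.range fun q : {q : ℕ × ℕ // 1 ≤ q.1 ∧ q.1 ≤ σ ∧ 1 ≤ q.2 ∧ q.2 ≤ 2 * p q.1} =>
      jordanVec g e p q.1.1 q.1.2) = ⊤ := by
  refine eq_top_of_pow_sub_one_apply_x_mem (I := ↑(Icc 1 σ)) (f := fun t => (G t : Module.End k V))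
    (x := fun t r => e (partialSum p t - r)) hb (fun t ht => hp.pos ht) hg
    (hE.iSup_partBlock_eq_top hp) fun t ht m hm => subset_span ⟨⟨(t, m + 1), ?_⟩, rfl⟩
  simp only [coe_Icc, Set.mem_Icc] at ht ⊢
  omega

lemma linearIndependent_jordanVec :
    LinearIndependent k fun q : {q : ℕ × ℕ // 1 ≤ q.1 ∧ q.1 ≤ σ ∧ 1 ≤ q.2 ∧ q.2 ≤ 2 * p q.1} =>
      jordanVec g e p q.1.1 q.1.2 := by
  let := Fintype.subtype (jordanIndex σ p) mem_jordanIndex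
  refine linearIndependent_of_top_le_span_of_card_eq_finrank
    (span_jordanVec_eq_top hp hb hg hE).ge ?_
  rw [Fintype.card_of_subtype _ mem_jordanIndex, hp.card_jordanIndex, hE.finrank_eq]

lemma isNilpotent_sub_one : IsNilpotent ((g : Module.End k V) - 1) := by
  refine ⟨2 * n, pow_sub_one_eq_zero (I := ↑(Icc 1 σ)) (f := fun t => (G t : Module.End k V))
    (x := fun t r => e (partialSum p t - r)) hb (fun t ht => hp.pos ht) hg
    (hE.iSup_partBlock_eq_top hp) fun t ht => ?_⟩
  have := partialSum_pred_add p (mem_Icc.1 ht).1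
  have := hp.partialSum_le (mem_Icc.1 ht).2
  omega

end JordanVectors

theorem stmt_14_general (n σ : ℕ) (p : ℕ → ℕ)
    (hp : IsPartitionOf n σ p)
    (e e' : ℕ → V)
    (hbasis_li : LinearIndependent k
      (Sum.elim (fun i : {i : ℕ // 1 ≤ i ∧ i ≤ n} => e i.1)
                (fun i : {i : ℕ // 1 ≤ i ∧ i ≤ n} => e' i.1)))
    (hbasis_sp : Submodule.span k
      (Set.range (Sum.elim (fun i : {i : ℕ // 1 ≤ i ∧ i ≤ n} => e i.1)
                           (fun i : {i : ℕ // 1 ≤ i ∧ i ≤ n} => e' i.1))) = ⊤)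
    (B : V →ₗ[k] V →ₗ[k] k)
    (halt : ∀ x : V, B x x = 0)
    (hBee' : ∀ i ∈ Finset.Icc 1 n, ∀ j ∈ Finset.Icc 1 n,
      B (e i) (e' j) = if i = j then 1 else 0)
    (hBee : ∀ i ∈ Finset.Icc 1 n, ∀ j ∈ Finset.Icc 1 n, B (e i) (e j) = 0)
    (hBe'e' : ∀ i ∈ Finset.Icc 1 n, ∀ j ∈ Finset.Icc 1 n, B (e' i) (e' j) = 0)
    (G : ℕ → (V ≃ₗ[k] V))
    (hGfix : ∀ h ∈ Finset.Icc 1 σ, ∀ i ∈ Finset.Icc 1 n,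
      (i < partialSum p (h - 1) + 1 ∨ partialSum p h < i) →
      G h (e i) = e i ∧ G h (e' i) = e' i)
    (hGstep : ∀ h ∈ Finset.Icc 1 σ, ∀ i,
      partialSum p (h - 1) + 1 ≤ i → i ≤ partialSum p h - 1 →
      G h (e i) = e i + e (i + 1))
    (hGlast : ∀ h ∈ Finset.Icc 1 σ,
      G h (e (partialSum p h)) = e (partialSum p h)
        + ∑ w ∈ Finset.Icc 1 (p h), ((-1 : k) ^ w) • e' (partialSum p h - w + 1))
    (hGdual : ∀ h ∈ Finset.Icc 1 σ, ∀ j, j ≤ p h - 1 →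
      G h (e' (partialSum p h - j)) =
        ∑ w ∈ Finset.range (p h - j), ((-1 : k) ^ w) • e' (partialSum p h - j - w)) :
    (∀ h ∈ Finset.Icc 1 σ, ∀ x y : V, B (G h x) (G h y) = B x y) ∧
    (∀ h ∈ Finset.Icc 1 σ, ∀ h' ∈ Finset.Icc 1 σ, G h * G h' = G h' * G h) ∧
    (let g : V ≃ₗ[k] V := ((List.range σ).map (fun t => G (t + 1))).prod
     (∀ x y : V, B (g x) (g y) = B x y) ∧
     IsNilpotent (g.toLinearMap - LinearMap.id : Module.End k V) ∧
     ∃ w : ℕ → ℕ → V,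
       LinearIndependent k
         (fun q : {q : ℕ × ℕ // 1 ≤ q.1 ∧ q.1 ≤ σ ∧ 1 ≤ q.2 ∧ q.2 ≤ 2 * p q.1} =>
           w q.1.1 q.1.2) ∧
       Submodule.span k
         (Set.range fun q : {q : ℕ × ℕ // 1 ≤ q.1 ∧ q.1 ≤ σ ∧ 1 ≤ q.2 ∧ q.2 ≤ 2 * p q.1} =>
           w q.1.1 q.1.2) = ⊤ ∧
       (∀ t ∈ Finset.Icc 1 σ, ∀ j, 1 ≤ j → j + 1 ≤ 2 * p t →
         g (w t j) - w t j = w t (j + 1)) ∧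
       (∀ t ∈ Finset.Icc 1 σ, g (w t (2 * p t)) - w t (2 * p t) = 0)) := by
  have hE : IsSymplecticBasis B e e' n := ⟨hbasis_li, hbasis_sp, halt, hBee', hBee, hBe'e'⟩
  have hb : ∀ h ∈ Finset.Icc 1 σ, IsUnipotentBlock (G h : Module.End k V)
      (fun r => e (partialSum p h - r)) (fun s => e' (partialSum p h - s)) (p h) := fun h hh =>
    isUnipotentBlock_of_apply (partialSum_pred_add p (Finset.mem_Icc.1 hh).1) (hGstep h hh)
      (hGlast h hh) (hGdual h hh)
  have hfix : ∀ h ∈ Finset.Icc 1 σ, ∀ t ∈ Finset.Icc 1 σ, h ≠ t →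
      ∀ v ∈ partBlock k e e' p t, G h v = v := fun _ hh _ ht hne _ hv =>
    apply_eq_self_of_mem_partBlock hp hGfix hh ht hne hv
  have hmaps : ∀ h ∈ Finset.Icc 1 σ, ∀ v ∈ partBlock k e e' p h, G h v ∈ partBlock k e e' p h :=
    fun h hh _ hv => (hb h hh).mapsTo_blockSpan hv
  have hiso := fun h hh => hE.isometry_of_isUnipotentBlock hp hb hfix (h := h) hh
  have htop := hE.iSup_partBlock_eq_top hp
  refine ⟨hiso, fun h hh h' hh' => commute_of_blocks hfix hmaps htop hh hh', ?_⟩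
  intro g
  have hg : ∀ t ∈ Finset.Icc 1 σ, ∀ v ∈ partBlock k e e' p t, g v = G t v := fun t ht _ hv => by
    rw [prod_map_range_succ_apply (fun s hs hst => hfix s hs t ht hst) (hmaps t ht) hv, if_pos ht]
  refine ⟨isometry_list_prod B ?_, isNilpotent_sub_one hp hb hg hE, jordanVec g e p,
    linearIndependent_jordanVec hp hb hg hE, span_jordanVec_eq_top hp hb hg hE,
    fun t _ j hj _ => apply_jordanVec_sub_self g e p t hj, fun t ht => ?_⟩
  · simp only [List.mem_map, List.mem_range]
    rintro _ ⟨s, hs, rfl⟩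
    exact hiso (s + 1) (by simp; omega)
  · rw [apply_jordanVec_sub_self g e p t (by have := hp.pos ht; omega),
      jordanVec_two_mul_add_one_eq_zero hp hb hg ht]

/-- 2.5, 2.6: let `V` have basis `e_1, …, e_n, e'_1, …, e'_n` and the alternating
bilinear form with `(e_i, e'_j) = δ_{ij}`, `(e_i, e_j) = (e'_i, e'_j) = 0`. For `p_* ∈ 𝒫_n` and
`P_r = p_1 + … + p_r`, let `g_h ∈ GL(V)` (`h ∈ [1,σ]`) act as specified on the basis vectors with
indices in `[P_{h−1}+1, P_h]` and fix the others. Then each `g_h` is an isometry, the `g_h`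
pairwise commute, and `g = g_1 g_2 ⋯ g_σ` is a unipotent isometry whose Jordan blocks have sizes
`2p_1, …, 2p_σ`: there is a basis `w_{t,j}` (`t ∈ [1,σ]`, `j ∈ [1, 2p_t]`) with
`(g−1) w_{t,j} = w_{t,j+1}` for `j < 2p_t` and `(g−1) w_{t,2p_t} = 0`. -/
theorem stmt_14 [FiniteDimensional k V] (n σ : ℕ) (p : ℕ → ℕ)
    (hp : IsPartitionOf n σ p)
    (e e' : ℕ → V)
    (hbasis_li : LinearIndependent k
      (Sum.elim (fun i : {i : ℕ // 1 ≤ i ∧ i ≤ n} => e i.1)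
                (fun i : {i : ℕ // 1 ≤ i ∧ i ≤ n} => e' i.1)))
    (hbasis_sp : Submodule.span k
      (Set.range (Sum.elim (fun i : {i : ℕ // 1 ≤ i ∧ i ≤ n} => e i.1)
                           (fun i : {i : ℕ // 1 ≤ i ∧ i ≤ n} => e' i.1))) = ⊤)
    (B : V →ₗ[k] V →ₗ[k] k)
    (halt : ∀ x : V, B x x = 0)
    (hBee' : ∀ i ∈ Finset.Icc 1 n, ∀ j ∈ Finset.Icc 1 n,
      B (e i) (e' j) = if i = j then 1 else 0)
    (hBee : ∀ i ∈ Finset.Icc 1 n, ∀ j ∈ Finset.Icc 1 n, B (e i) (e j) = 0)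
    (hBe'e' : ∀ i ∈ Finset.Icc 1 n, ∀ j ∈ Finset.Icc 1 n, B (e' i) (e' j) = 0)
    (G : ℕ → (V ≃ₗ[k] V))
    (hGfix : ∀ h ∈ Finset.Icc 1 σ, ∀ i ∈ Finset.Icc 1 n,
      (i < partialSum p (h - 1) + 1 ∨ partialSum p h < i) →
      G h (e i) = e i ∧ G h (e' i) = e' i)
    (hGstep : ∀ h ∈ Finset.Icc 1 σ, ∀ i,
      partialSum p (h - 1) + 1 ≤ i → i ≤ partialSum p h - 1 →
      G h (e i) = e i + e (i + 1))
    (hGlast : ∀ h ∈ Finset.Icc 1 σ,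
      G h (e (partialSum p h)) = e (partialSum p h)
        + ∑ w ∈ Finset.Icc 1 (p h), ((-1 : k) ^ w) • e' (partialSum p h - w + 1))
    (hGdual : ∀ h ∈ Finset.Icc 1 σ, ∀ j, j ≤ p h - 1 →
      G h (e' (partialSum p h - j)) =
        ∑ w ∈ Finset.range (p h - j), ((-1 : k) ^ w) • e' (partialSum p h - j - w)) :
    (∀ h ∈ Finset.Icc 1 σ, ∀ x y : V, B (G h x) (G h y) = B x y) ∧
    (∀ h ∈ Finset.Icc 1 σ, ∀ h' ∈ Finset.Icc 1 σ, G h * G h' = G h' * G h) ∧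
    (let g : V ≃ₗ[k] V := ((List.range σ).map (fun t => G (t + 1))).prod
     (∀ x y : V, B (g x) (g y) = B x y) ∧
     IsNilpotent (g.toLinearMap - LinearMap.id : Module.End k V) ∧
     ∃ w : ℕ → ℕ → V,
       LinearIndependent k
         (fun q : {q : ℕ × ℕ // 1 ≤ q.1 ∧ q.1 ≤ σ ∧ 1 ≤ q.2 ∧ q.2 ≤ 2 * p q.1} =>
           w q.1.1 q.1.2) ∧
       Submodule.span k
         (Set.range fun q : {q : ℕ × ℕ // 1 ≤ q.1 ∧ q.1 ≤ σ ∧ 1 ≤ q.2 ∧ q.2 ≤ 2 * p q.1} =>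
           w q.1.1 q.1.2) = ⊤ ∧
       (∀ t ∈ Finset.Icc 1 σ, ∀ j, 1 ≤ j → j + 1 ≤ 2 * p t →
         g (w t j) - w t j = w t (j + 1)) ∧
       (∀ t ∈ Finset.Icc 1 σ, g (w t (2 * p t)) - w t (2 * p t) = 0)) :=
  stmt_14_general n σ p hp e e' hbasis_li hbasis_sp B halt hBee' hBee hBe'e' G hGfix hGstep hGlast
    hGdual

end
end
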